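/- arXiv:2411.04071 — 9 statements merged into one kernel-verified Lean document; each statement's English description precedes it below -/
import Mathlib

section
/- For every intersecting hypergraph H on k vertices and every integer r ≥ 1 with k ≥ r(r+1), every fractional matching of H has size at most k/(r+1). In particular, taking r = ⌊√k⌋ appropriately, every fractional matching of an intersecting hypergraph on k vertices has size at most √k. -/
/-- Double counting: summing degrees over a vertex set s counts each edge
with multiplicity |s ∩ e|. -/
lemma aux_swap {V : Type*} [Fintype V] [DecidableEq V]
    (E : Finset (Finset V)) (w : Finset V → ℝ) (s : Finset V) :
    ∑ v ∈ s, ∑ e ∈ E.filter (fun e => v ∈ e), w e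
      = ∑ e ∈ E, ((s ∩ e).card : ℝ) * w e := by
  have : ∀ v ∈ s, ∑ e ∈ E.filter (fun e => v ∈ e), w e
      = ∑ e ∈ E, (if v ∈ e then w e else 0) := by
    intro v _; rw [Finset.sum_filter]
  rw [Finset.sum_congr rfl this, Finset.sum_comm]
  refine Finset.sum_congr rfl fun e _ => ?_
  rw [← Finset.sum_filter]
  have : s.filter (fun v => v ∈ e) = s ∩ e := by
    ext v; simp [Finset.mem_inter, Finset.mem_filter]
  rw [this, Finset.sum_const, nsmul_eq_mul]

/-- If e is an edge of an intersecting family, total weight ≤ |e|. -/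
lemma aux_edge_bound {V : Type*} [Fintype V] [DecidableEq V]
    (E : Finset (Finset V))
    (hint : ∀ e ∈ E, ∀ f ∈ E, (e ∩ f).Nonempty)
    (w : Finset V → ℝ) (hw0 : ∀ e ∈ E, 0 ≤ w e)
    (hdeg : ∀ v : V, ∑ e ∈ E.filter (fun e => v ∈ e), w e ≤ 1)
    (e : Finset V) (he : e ∈ E) :
    ∑ f ∈ E, w f ≤ (e.card : ℝ) := by
  have h1 : ∑ f ∈ E, w f ≤ ∑ f ∈ E, ((e ∩ f).card : ℝ) * w f := by
    refine Finset.sum_le_sum fun f hf => ?_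
    have hcard : 1 ≤ ((e ∩ f).card : ℝ) := by
      have := Finset.card_pos.mpr (hint e he f hf)
      exact_mod_cast this
    nlinarith [hw0 f hf]
  have h2 : ∑ f ∈ E, ((e ∩ f).card : ℝ) * w f ≤ (e.card : ℝ) := by
    rw [← aux_swap]
    calc ∑ v ∈ e, ∑ f ∈ E.filter (fun f => v ∈ f), w f
        ≤ ∑ v ∈ e, (1 : ℝ) := Finset.sum_le_sum fun v _ => hdeg v
      _ = (e.card : ℝ) := by simp
  linarith

/-- If every edge has size ≥ m > 0, total weight ≤ k / m. -/
lemma aux_cover_bound {V : Type*} [Fintype V] [DecidableEq V] (k : ℕ)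
    (hk : Fintype.card V = k)
    (E : Finset (Finset V))
    (w : Finset V → ℝ) (hw0 : ∀ e ∈ E, 0 ≤ w e)
    (hdeg : ∀ v : V, ∑ e ∈ E.filter (fun e => v ∈ e), w e ≤ 1)
    (m : ℝ) (hm : 0 < m) (hsize : ∀ e ∈ E, m ≤ (e.card : ℝ)) :
    ∑ e ∈ E, w e ≤ (k : ℝ) / m := by
  rw [le_div_iff₀ hm]
  have h1 : (∑ e ∈ E, w e) * m ≤ ∑ e ∈ E, ((Finset.univ ∩ e).card : ℝ) * w e := by
    rw [Finset.sum_mul]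
    refine Finset.sum_le_sum fun e he => ?_
    have : Finset.univ ∩ e = e := by simp
    rw [this, mul_comm]
    exact mul_le_mul_of_nonneg_right (hsize e he) (hw0 e he)
  have h2 : ∑ e ∈ E, ((Finset.univ ∩ e).card : ℝ) * w e ≤ (k : ℝ) := by
    rw [← aux_swap]
    calc ∑ v ∈ Finset.univ, ∑ f ∈ E.filter (fun f => v ∈ f), w f
        ≤ ∑ v ∈ (Finset.univ : Finset V), (1 : ℝ) :=
          Finset.sum_le_sum fun v _ => hdeg v
      _ = (k : ℝ) := by simp [hk]
  linarith

/-- For an intersecting hypergraph on k ≥ 1 vertices: for every r ≥ 1 with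
k ≥ r(r+1), every fractional matching has size at most k/(r+1); and in any case
every fractional matching has size at most √k. -/
theorem stmt_2 {V : Type*} [Fintype V] [DecidableEq V] (k : ℕ)
    (hk : Fintype.card V = k) (hk1 : 1 ≤ k)
    (E : Finset (Finset V))
    (hne : ∀ e ∈ E, e.Nonempty)
    (hint : ∀ e ∈ E, ∀ f ∈ E, (e ∩ f).Nonempty)
    (w : Finset V → ℝ)
    (hw : ∀ e ∈ E, w e ∈ Set.Icc (0 : ℝ) 1)
    (hdeg : ∀ v : V, ∑ e ∈ E.filter (fun e => v ∈ e), w e ≤ 1) :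
    (∀ r : ℕ, 1 ≤ r → r * (r + 1) ≤ k → ∑ e ∈ E, w e ≤ (k : ℝ) / (r + 1)) ∧
      ∑ e ∈ E, w e ≤ Real.sqrt k := by
  have hw0 : ∀ e ∈ E, 0 ≤ w e := fun e he => (hw e he).1
  constructor
  · intro r hr hrk
    by_cases hsmall : ∃ e ∈ E, e.card ≤ r
    · obtain ⟨e, he, hec⟩ := hsmall
      have h1 := aux_edge_bound E hint w hw0 hdeg e he
      have h2 : (r : ℝ) ≤ (k : ℝ) / (r + 1) := by
        rw [le_div_iff₀ (by positivity)]
        have : (r * (r + 1) : ℝ) ≤ (k : ℝ) := by exact_mod_cast hrk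
        linarith
      have h3 : ((e.card : ℕ) : ℝ) ≤ (r : ℝ) := by exact_mod_cast hec
      linarith
    · push_neg at hsmall
      refine aux_cover_bound k hk E w hw0 hdeg ((r : ℝ) + 1) (by positivity)
        fun e he => ?_
      have := hsmall e he
      have : r + 1 ≤ e.card := this
      exact_mod_cast this
  · have hkpos : (0 : ℝ) < (k : ℝ) := by exact_mod_cast hk1
    have hsq : (0 : ℝ) < Real.sqrt k := Real.sqrt_pos.mpr hkpos
    by_cases hsmall : ∃ e ∈ E, (e.card : ℝ) ≤ Real.sqrt k
    · obtain ⟨e, he, hec⟩ := hsmall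
      have h1 := aux_edge_bound E hint w hw0 hdeg e he
      linarith
    · push_neg at hsmall
      have h := aux_cover_bound k hk E w hw0 hdeg (Real.sqrt k) hsq
        fun e he => le_of_lt (hsmall e he)
      have : (k : ℝ) / Real.sqrt k = Real.sqrt k := by
        rw [Real.div_sqrt]
      linarith
end

section
/- Let J be an intersecting hypergraph on vertex set [k] with at most k edges admitting a fractional matching w of size ν. For any positive integer Δ, the multihypergraph H obtained by taking ⌊w(e)·Δ⌋ copies of each edge e of J has maximum degree at most Δ and chromatic index χ'(H) ≥ ν·Δ − k. -/
lemma exists_disjoint_colouring {α : Type*} [DecidableEq α] (J : Finset α) (f : α → ℕ) :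
    ∃ c : α → Finset (Fin (∑ e ∈ J, f e)),
      (∀ e ∈ J, (c e).card = f e) ∧ (∀ e ∈ J, ∀ g ∈ J, e ≠ g → Disjoint (c e) (c g)) := by
  classical
  set m := ∑ e ∈ J, f e with hm
  set S : Finset (Σ e : α, Fin (f e)) := J.sigma (fun e => Finset.univ) with hS
  have hScard : S.card = m := by
    simp [hS, hm, Finset.card_sigma]
  let g : S ≃ Fin S.card := S.equivFin
  let G : {x // x ∈ S} → Fin m := fun p => Fin.cast hScard (g p)
  have hGinj : Function.Injective G := by
    intro p q h
    apply g.injective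
    apply Fin.val_injective
    simpa [G] using congrArg Fin.val h
  refine ⟨fun e => (S.attach.filter (fun p => p.1.1 = e)).image G, ?_, ?_⟩
  · intro e he
    rw [Finset.card_image_of_injective _ hGinj]
    have h1 : S.attach.filter (fun p => p.1.1 = e) =
        ((S.filter (fun x => x.1 = e)).attach.map
          ⟨fun p => ⟨p.1, (Finset.mem_filter.mp p.2).1⟩, by
            intro a b h
            exact Subtype.ext (by simpa using congrArg Subtype.val h)⟩) := by
      ext p
      simp only [Finset.mem_filter, Finset.mem_attach, true_and, Finset.mem_map,
        Function.Embedding.coeFn_mk]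
      constructor
      · intro h
        exact ⟨⟨p.1, Finset.mem_filter.mpr ⟨p.2, h⟩⟩, Subtype.ext rfl⟩
      · rintro ⟨x, rfl⟩
        exact (Finset.mem_filter.mp x.2).2
    rw [h1, Finset.card_map, Finset.card_attach]
    have h2 : S.filter (fun x => x.1 = e) = Finset.sigma {e} (fun e => Finset.univ) := by
      ext x
      simp only [hS, Finset.mem_filter, Finset.mem_sigma, Finset.mem_univ, and_true,
        Finset.mem_singleton]
      constructor
      · rintro ⟨-, h⟩; exact h
      · rintro h; exact ⟨h ▸ he, h⟩
    rw [h2, Finset.card_sigma]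
    simp
  · intro e he e' he' hne
    rw [Finset.disjoint_left]
    rintro a ha ha'
    simp only [Finset.mem_image] at ha ha'
    obtain ⟨p, hp, rfl⟩ := ha
    obtain ⟨q, hq, hqa⟩ := ha'
    have := hGinj hqa
    subst this
    simp only [Finset.mem_filter] at hp hq
    exact hne (hp.2 ▸ hq.2 ▸ rfl)

/-- From an intersecting hypergraph J on [k] with at most k edges and a
fractional matching w of size ν, the multihypergraph with ⌊w(e)·Δ⌋ copies of
each edge e has maximum degree at most Δ and chromatic index at least ν·Δ − k.
The chromatic index of this multihypergraph is expressed by assigning to each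
edge e of J a set of ⌊w(e)·Δ⌋ colours (one per parallel copy), with distinct
edges receiving disjoint colour sets. -/
theorem stmt_6 (k Δ : ℕ) (hΔ : 0 < Δ) (ν : ℝ)
    (J : Finset (Finset (Fin k)))
    (hJcard : J.card ≤ k)
    (hne : ∀ e ∈ J, e.Nonempty)
    (hint : ∀ e ∈ J, ∀ f ∈ J, (e ∩ f).Nonempty)
    (w : Finset (Fin k) → ℝ)
    (hw : ∀ e ∈ J, w e ∈ Set.Icc (0 : ℝ) 1)
    (hdeg : ∀ v : Fin k, ∑ e ∈ J.filter (fun e => v ∈ e), w e ≤ 1)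
    (hsize : ∑ e ∈ J, w e = ν) :
    (∀ v : Fin k, ∑ e ∈ J.filter (fun e => v ∈ e), ⌊w e * Δ⌋₊ ≤ Δ) ∧
      ν * Δ - k ≤
         ((sInf {n : ℕ | ∃ c : Finset (Fin k) → Finset (Fin n),
            (∀ e ∈ J, (c e).card = ⌊w e * Δ⌋₊) ∧
            (∀ e ∈ J, ∀ f ∈ J, e ≠ f → (e ∩ f).Nonempty → Disjoint (c e) (c f))} : ℕ) : ℝ) := by
  classical
  have hfloor_le : ∀ e ∈ J, (⌊w e * Δ⌋₊ : ℝ) ≤ w e * Δ := fun e he =>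
    Nat.floor_le (mul_nonneg (hw e he).1 (Nat.cast_nonneg Δ))
  constructor
  · intro v
    have h1 : (↑(∑ e ∈ J.filter (fun e => v ∈ e), ⌊w e * Δ⌋₊) : ℝ) ≤ Δ := by
      push_cast
      calc ∑ e ∈ J.filter (fun e => v ∈ e), (⌊w e * Δ⌋₊ : ℝ)
          ≤ ∑ e ∈ J.filter (fun e => v ∈ e), w e * Δ :=
            Finset.sum_le_sum (fun e he => hfloor_le e (Finset.mem_filter.mp he).1)
        _ = (∑ e ∈ J.filter (fun e => v ∈ e), w e) * Δ := (Finset.sum_mul ..).symm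
        _ ≤ 1 * Δ := by
            exact mul_le_mul_of_nonneg_right (hdeg v) (Nat.cast_nonneg Δ)
        _ = Δ := one_mul _
    exact_mod_cast h1
  · set m := ∑ e ∈ J, ⌊w e * Δ⌋₊ with hm
    set Sset := {n : ℕ | ∃ c : Finset (Fin k) → Finset (Fin n),
            (∀ e ∈ J, (c e).card = ⌊w e * Δ⌋₊) ∧
            (∀ e ∈ J, ∀ f ∈ J, e ≠ f → (e ∩ f).Nonempty → Disjoint (c e) (c f))} with hSset
    have hmem : m ∈ Sset := by
      obtain ⟨c, hc1, hc2⟩ := exists_disjoint_colouring J (fun e => ⌊w e * Δ⌋₊)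
      exact ⟨c, hc1, fun e he f hf hne' _ => hc2 e he f hf hne'⟩
    have hlb : ∀ n ∈ Sset, m ≤ n := by
      intro n hn
      obtain ⟨c, hc1, hc2⟩ := hn
      have hdisj : ∀ e ∈ J, ∀ f ∈ J, e ≠ f → Disjoint (c e) (c f) := by
        intro e he f hf hne'
        exact hc2 e he f hf hne' (hint e he f hf)
      calc m = ∑ e ∈ J, (c e).card := by
              rw [hm]; exact (Finset.sum_congr rfl (fun e he => hc1 e he)).symm
        _ = (J.biUnion c).card := (Finset.card_biUnion hdisj).symm
        _ ≤ Fintype.card (Fin n) := Finset.card_le_univ _ |>.trans (by simp)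
        _ = n := Fintype.card_fin n
    have hsinf : m ≤ sInf Sset := le_csInf ⟨m, hmem⟩ hlb
    have hreal : ν * Δ - k ≤ (m : ℝ) := by
      have h2 : ∀ e ∈ J, w e * Δ - 1 ≤ (⌊w e * Δ⌋₊ : ℝ) := fun e _ =>
        (Nat.sub_one_lt_floor _).le
      calc ν * Δ - k ≤ ν * Δ - J.card := by
              have : (J.card : ℝ) ≤ k := by exact_mod_cast hJcard
              linarith
        _ = ∑ e ∈ J, (w e * Δ - 1) := by
              rw [Finset.sum_sub_distrib, ← Finset.sum_mul, hsize]
              simp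
        _ ≤ ∑ e ∈ J, (⌊w e * Δ⌋₊ : ℝ) := Finset.sum_le_sum h2
        _ = (m : ℝ) := by push_cast [hm]; ring
    exact hreal.trans (by exact_mod_cast hsinf)
end

section
/- Let H be a multigraph (a 2-uniform multihypergraph) with maximum degree Δ. Then the chromatic index of H is at most ⌊3Δ/2⌋ (Shannon's theorem). -/
/-!
With `k` colours and `3Δ ≤ 2k + 1`, every proper partial edge colouring with an uncoloured edge can
be changed into one with fewer uncoloured edges. Let `e = uv` be uncoloured; each of `u`, `v` misses
at least `k - Δ + 1` colours. If they miss a common colour, colour `e`. Otherwise take `β` missing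
at `v` and the `β`-edge `f = uw` at `u`; moving `β` from `f` to `e` leaves `f` uncoloured, so a
colour missing at both `u` and `w` also finishes. If some `γ` is missing at both `v` and `w`, take
`α` missing at `u` and look at the `αγ`-Kempe chain through `u`: it has maximum degree two, and
`u`, `v`, `w` have degree at most one in it, so it cannot contain both `v` and `w`. Swapping `α`
and `γ` on it makes `γ` missing at `u` and at whichever of `v`, `w` it avoids, and that edge is
coloured `γ`. In the remaining case the colours missing at `u`, `v`, `w` form three disjoint sets,
so `3(k - Δ) + 2 ≤ k`, contradicting `3Δ ≤ 2k + 1`.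
-/

open Finset Function

namespace SimpleGraph

variable {V : Type*} {G : SimpleGraph V}

-- The degree sum is at most `2n - 3`, leaving fewer than the `n - 1` edges a connected graph needs.
theorem Connected.eq_of_degree_le_one [Fintype V] [DecidableRel G.Adj] (hG : G.Connected)
    (hdeg : ∀ x, G.degree x ≤ 2) {u v w : V} (hu : G.degree u ≤ 1) (hv : G.degree v ≤ 1)
    (hw : G.degree w ≤ 1) (hvu : v ≠ u) (hwu : w ≠ u) : v = w := by
  classical
  by_contra hvw
  set s : Finset V := {u, v, w}
  have hs : #s = 3 := by
    rw [card_insert_of_notMem (by simp [hvu.symm, hwu.symm]), card_pair hvw]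
  have hsum_s : ∑ x ∈ s, G.degree x ≤ #s := by
    rw [card_eq_sum_ones]
    exact sum_le_sum fun x hx => by simp only [s, mem_insert, mem_singleton] at hx; grind
  have hsum_sc : ∑ x ∈ sᶜ, G.degree x ≤ 2 * #sᶜ := by
    rw [mul_comm, ← smul_eq_mul]
    exact sum_le_card_nsmul _ _ _ fun x _ => hdeg x
  have hedges := hG.card_vert_le_card_edgeSet_add_one
  rw [Nat.card_eq_fintype_card, Nat.card_eq_fintype_card, card_edgeSet] at hedges
  have hsplit := sum_add_sum_compl s (G.degree ·)
  rw [G.sum_degrees_eq_twice_card_edges] at hsplit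
  rw [card_compl] at hsum_sc
  have := s.card_le_univ
  omega

theorem Reachable.eq_of_degree_le_one [G.LocallyFinite] {u v w : V}
    (hfin : (G.connectedComponentMk u).supp.Finite) (hdeg : ∀ x, G.degree x ≤ 2)
    (hu : G.degree u ≤ 1) (hv : G.degree v ≤ 1) (hw : G.degree w ≤ 1) (hvu : v ≠ u) (hwu : w ≠ u)
    (huv : G.Reachable u v) (huw : G.Reachable u w) : v = w := by
  classical
  set C := G.connectedComponentMk u
  have := hfin.fintype
  have hdegC (x : C.supp) : C.toSimpleGraph.degree x ≤ G.degree x :=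
    (Copy.induce G C.supp).degree_le x
  have hmem {x} (hx : G.Reachable u x) : x ∈ C.supp :=
    (C.mem_supp_iff x).mpr (ConnectedComponent.eq.mpr hx.symm)
  have := C.connected_toSimpleGraph.eq_of_degree_le_one (u := ⟨u, hmem .rfl⟩)
    (v := ⟨v, hmem huv⟩) (w := ⟨w, hmem huw⟩) (fun x => (hdegC x).trans (hdeg x))
    ((hdegC _).trans hu) ((hdegC _).trans hv) ((hdegC _).trans hw)
    (by simpa using hvu) (by simpa using hwu)
  simpa using this

end SimpleGraph

theorem Finset.exists_eq_pair_of_card_eq_two {V : Type*} [DecidableEq V] {s : Finset V}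
    (hs : #s = 2) {u : V} (hu : u ∈ s) : ∃ w, s = {u, w} := by
  obtain ⟨w, hw⟩ := card_eq_one.mp (by rw [card_erase_of_mem hu, hs] : #(s.erase u) = 1)
  exact ⟨w, by rw [← hw, insert_erase hu]⟩

namespace EdgeColoring

variable {V ι κ : Type*}

section Defs

variable (E : ι → Finset V)

def Proper (c : ι → Option κ) : Prop :=
  ∀ ⦃i j x δ⦄, x ∈ E i → x ∈ E j → c i = some δ → c j = some δ → i = j

def Free (c : ι → Option κ) (x : V) (δ : κ) : Prop :=
  ∀ i, x ∈ E i → c i ≠ some δ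

def uncolored [Fintype ι] (c : ι → Option κ) : Finset ι :=
  {i | c i = none}

def Improvable [Fintype ι] (c : ι → Option κ) : Prop :=
  ∃ c' : ι → Option κ, Proper E c' ∧ #(uncolored c') < #(uncolored c)

def kempeGraph (c : ι → Option κ) (α γ : κ) : SimpleGraph V where
  Adj x y := x ≠ y ∧ ∃ i, (c i = some α ∨ c i = some γ) ∧ x ∈ E i ∧ y ∈ E i
  symm := ⟨fun _ _ ⟨hxy, i, hc, hx, hy⟩ => ⟨hxy.symm, i, hc, hy, hx⟩⟩
  loopless := ⟨fun _ h => h.1 rfl⟩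

end Defs

variable {E : ι → Finset V} {c : ι → Option κ} {e f g : ι} {u v w x : V} {δ : κ}

theorem proper_none : Proper E (fun _ => (none : Option κ)) :=
  fun _ _ _ _ _ _ h => by cases h

section Update

variable [DecidableEq ι]

theorem Proper.update_none (hP : Proper E c) (f : ι) : Proper E (update c f none) := by
  intro i j x δ hi hj hci hcj
  rcases eq_or_ne i f with rfl | hif
  · simp at hci
  rcases eq_or_ne j f with rfl | hjf
  · simp at hcj
  rw [update_of_ne hif] at hci
  rw [update_of_ne hjf] at hcj
  exact hP hi hj hci hcj

theorem Proper.update_some [DecidableEq V] (hP : Proper E c) (hEe : E e = {u, v})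
    (hu : Free E c u δ) (hv : Free E c v δ) : Proper E (update c e (some δ)) := by
  have hfree : ∀ ⦃j x⦄, j ≠ e → x ∈ E e → x ∈ E j → c j ≠ some δ := by
    intro j x _ hx hj
    rw [hEe, mem_insert, mem_singleton] at hx
    rcases hx with rfl | rfl
    exacts [hu j hj, hv j hj]
  intro i j x δ' hi hj hci hcj
  by_cases hie : i = e <;> by_cases hje : j = e
  · exact hie.trans hje.symm
  · subst hie
    rw [update_self, Option.some_inj] at hci
    rw [update_of_ne hje, ← hci] at hcj
    exact absurd hcj (hfree hje hi hj)
  · subst hje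
    rw [update_self, Option.some_inj] at hcj
    rw [update_of_ne hie, ← hcj] at hci
    exact absurd hci (hfree hie hj hi)
  · rw [update_of_ne hie] at hci
    rw [update_of_ne hje] at hcj
    exact hP hi hj hci hcj

theorem Free.update {o : Option κ} (h : Free E c x δ) (ho : x ∈ E g → o ≠ some δ) :
    Free E (update c g o) x δ := by
  intro i hi
  rcases eq_or_ne i g with rfl | hig
  · simpa using ho hi
  · simpa [hig] using h i hi

theorem free_update_none_of_mem (hP : Proper E c) (hx : x ∈ E f) (hf : c f = some δ) :
    Free E (update c f none) x δ := by
  intro i hi hci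
  rcases eq_or_ne i f with rfl | hif
  · simp at hci
  · rw [update_of_ne hif] at hci
    exact hif (hP hi hx hci hf)

variable [Fintype ι]

theorem card_uncolored_update_some_lt (he : c e = none) :
    #(uncolored (update c e (some δ))) < #(uncolored c) := by
  refine card_lt_card ⟨fun i hi => ?_, fun h => ?_⟩
  · simp only [uncolored, mem_filter, mem_univ, true_and] at hi ⊢
    rcases eq_or_ne i e with rfl | hie
    · simp at hi
    · rwa [update_of_ne hie] at hi
  · have := h (by simpa [uncolored] using he)
    simp [uncolored] at this

theorem card_uncolored_update_none_le :
    #(uncolored (update c f none)) ≤ #(uncolored c) + 1 := by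
  refine (card_le_card fun i hi => ?_).trans (card_insert_le f _)
  simp only [uncolored, mem_filter, mem_univ, true_and, mem_insert] at hi ⊢
  rcases eq_or_ne i f with rfl | hif
  · exact .inl rfl
  · rw [update_of_ne hif] at hi
    exact .inr hi

end Update

section Improvable

variable [Fintype ι]

theorem Improvable.of_card_uncolored_le {c' : ι → Option κ} (h : Improvable E c')
    (hle : #(uncolored c') ≤ #(uncolored c)) : Improvable E c :=
  let ⟨d, hd, hlt⟩ := h
  ⟨d, hd, hlt.trans_le hle⟩

theorem improvable_of_free [DecidableEq V] [DecidableEq ι] (hP : Proper E c)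
    (hEe : E e = {u, v}) (he : c e = none) (hu : Free E c u δ) (hv : Free E c v δ) :
    Improvable E c :=
  ⟨_, hP.update_some hEe hu hv, card_uncolored_update_some_lt he⟩

end Improvable

section Kempe

variable {α γ : κ}

theorem reachable_kempeGraph_of_mem {i : ι} {y : V} (hR : (kempeGraph E c α γ).Reachable u x)
    (hc : c i = some α ∨ c i = some γ) (hx : x ∈ E i) (hy : y ∈ E i) :
    (kempeGraph E c α γ).Reachable u y := by
  by_cases hxy : x = y
  · exact hxy ▸ hR
  · exact hR.trans (SimpleGraph.Adj.reachable ⟨hxy, i, hc, hx, hy⟩)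

theorem kempeGraph_update_le [DecidableEq ι] {o : Option κ} (hα : o ≠ some α)
    (hγ : o ≠ some γ) :
    kempeGraph E (update c g o) α γ ≤ kempeGraph E c α γ := by
  rintro x y ⟨hxy, i, hc, hx, hy⟩
  refine ⟨hxy, i, ?_, hx, hy⟩
  rcases eq_or_ne i g with rfl | hig
  · simp only [update_self] at hc
    tauto
  · rwa [update_of_ne hig] at hc

theorem kempeGraph_support_subset : (kempeGraph E c α γ).support ⊆ ⋃ i, (E i : Set V) :=
  fun _ ⟨_, _, i, _, hx, _⟩ => Set.mem_iUnion.mpr ⟨i, hx⟩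

open Classical in
variable (E) in
noncomputable def kempeSwap [DecidableEq κ] (c : ι → Option κ) (α γ : κ) (u : V) (i : ι) :
    Option κ :=
  if ∃ x ∈ E i, (kempeGraph E c α γ).Reachable u x then (c i).map (Equiv.swap α γ) else c i

variable [DecidableEq κ]

theorem kempeSwap_apply_of_reachable {i : ι} (hx : x ∈ E i)
    (hR : (kempeGraph E c α γ).Reachable u x) :
    kempeSwap E c α γ u i = (c i).map (Equiv.swap α γ) :=
  if_pos ⟨x, hx, hR⟩

theorem kempeSwap_apply_of_not_reachable {i : ι} (hx : x ∈ E i)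
    (hR : ¬ (kempeGraph E c α γ).Reachable u x) : kempeSwap E c α γ u i = c i := by
  rw [kempeSwap]
  split_ifs with h
  · obtain ⟨y, hy, hRy⟩ := h
    cases hci : c i with
    | none => rfl
    | some δ =>
      have hδα : δ ≠ α := fun h => hR (reachable_kempeGraph_of_mem hRy (.inl (h ▸ hci)) hy hx)
      have hδγ : δ ≠ γ := fun h => hR (reachable_kempeGraph_of_mem hRy (.inr (h ▸ hci)) hy hx)
      simp [Equiv.swap_apply_of_ne_of_ne hδα hδγ]
  · rfl

theorem kempeSwap_eq_none_iff {i : ι} : kempeSwap E c α γ u i = none ↔ c i = none := by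
  rw [kempeSwap]
  split_ifs
  exacts [Option.map_eq_none_iff, Iff.rfl]

theorem Proper.kempeSwap (hP : Proper E c) : Proper E (kempeSwap E c α γ u) := by
  intro i j x δ hi hj hci hcj
  by_cases hR : (kempeGraph E c α γ).Reachable u x
  · rw [kempeSwap_apply_of_reachable hi hR, Option.map_eq_some_iff] at hci
    rw [kempeSwap_apply_of_reachable hj hR, Option.map_eq_some_iff] at hcj
    obtain ⟨δi, hδi, hsi⟩ := hci
    obtain ⟨δj, hδj, hsj⟩ := hcj
    obtain rfl : δi = δj := (Equiv.swap α γ).injective (hsi.trans hsj.symm)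
    exact hP hi hj hδi hδj
  · rw [kempeSwap_apply_of_not_reachable hi hR] at hci
    rw [kempeSwap_apply_of_not_reachable hj hR] at hcj
    exact hP hi hj hci hcj

theorem Free.kempeSwap_of_reachable (h : Free E c x (Equiv.swap α γ δ))
    (hR : (kempeGraph E c α γ).Reachable u x) : Free E (kempeSwap E c α γ u) x δ := by
  intro i hi hci
  rw [kempeSwap_apply_of_reachable hi hR, Option.map_eq_some_iff] at hci
  obtain ⟨ε, hε, rfl⟩ := hci
  exact h i hi (by rwa [Equiv.swap_apply_self])

theorem Free.kempeSwap_of_not_reachable (h : Free E c x δ)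
    (hR : ¬ (kempeGraph E c α γ).Reachable u x) : Free E (kempeSwap E c α γ u) x δ := by
  intro i hi
  rw [kempeSwap_apply_of_not_reachable hi hR]
  exact h i hi

theorem uncolored_kempeSwap [Fintype ι] : uncolored (kempeSwap E c α γ u) = uncolored c := by
  ext i
  simp [uncolored, kempeSwap_eq_none_iff]

theorem improvable_of_not_reachable [Fintype ι] [DecidableEq ι] [DecidableEq V]
    (hP : Proper E c) (hEe : E e = {u, v}) (he : c e = none) (hu : Free E c u α)
    (hv : Free E c v γ) (hR : ¬ (kempeGraph E c α γ).Reachable u v) : Improvable E c := by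
  have hu' : Free E (kempeSwap E c α γ u) u γ :=
    Free.kempeSwap_of_reachable (by rwa [Equiv.swap_apply_right]) .rfl
  refine (improvable_of_free hP.kempeSwap hEe (kempeSwap_eq_none_iff.mpr he) hu'
    (hv.kempeSwap_of_not_reachable hR)).of_card_uncolored_le ?_
  rw [uncolored_kempeSwap]

end Kempe

section KempeChain

variable {α γ : κ} [Finite ι]

noncomputable instance : (kempeGraph E c α γ).LocallyFinite := fun _ =>
  ((Set.finite_iUnion fun i => (E i).finite_toSet).subset fun _ hy =>
    kempeGraph_support_subset (SimpleGraph.Adj.mem_support_right hy)).fintype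

theorem finite_supp_kempeGraph (u : V) :
    ((kempeGraph E c α γ).connectedComponentMk u).supp.Finite := by
  refine ((Set.finite_iUnion fun i => (E i).finite_toSet).insert u).subset fun x hx => ?_
  rcases eq_or_ne x u with rfl | hxu
  · exact Set.mem_insert _ _
  · refine Set.mem_insert_of_mem _ (kempeGraph_support_subset (c := c) (α := α) (γ := γ) ?_)
    exact SimpleGraph.mem_support_of_reachable hxu
      (SimpleGraph.ConnectedComponent.exact hx)

open Classical in
theorem degree_kempeGraph_le [DecidableEq V] (hE : ∀ i, #(E i) = 2) (hP : Proper E c) (x : V) :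
    (kempeGraph E c α γ).degree x ≤ #{δ ∈ {α, γ} | ¬ Free E c x δ} := by
  rw [← SimpleGraph.card_neighborFinset_eq_degree]
  refine card_le_card_of_forall_subsingleton (fun y δ => ∃ i, c i = some δ ∧ x ∈ E i ∧ y ∈ E i)
    (fun y hy => ?_) (fun δ _ y₁ hy₁ y₂ hy₂ => ?_)
  · obtain ⟨-, i, hc, hx, hy⟩ := (SimpleGraph.mem_neighborFinset _ _ _).mp hy
    rcases hc with hc | hc
    all_goals exact ⟨_, mem_filter.mpr ⟨by simp, fun h => h i hx hc⟩, i, hc, hx, hy⟩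
  · obtain ⟨hxy₁, -⟩ := (SimpleGraph.mem_neighborFinset _ _ _).mp hy₁.1
    obtain ⟨hxy₂, -⟩ := (SimpleGraph.mem_neighborFinset _ _ _).mp hy₂.1
    obtain ⟨i₁, hc₁, hx₁, hy₁⟩ := hy₁.2
    obtain ⟨i₂, hc₂, hx₂, hy₂⟩ := hy₂.2
    obtain rfl := hP hx₁ hx₂ hc₁ hc₂
    obtain ⟨z, hz⟩ := exists_eq_pair_of_card_eq_two (hE i₁) hx₁
    rw [hz, mem_insert, mem_singleton] at hy₁ hy₂
    grind

theorem eq_of_reachable_kempeGraph [DecidableEq V] (hE : ∀ i, #(E i) = 2) (hP : Proper E c)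
    (hu : Free E c u α) (hv : Free E c v γ) (hw : Free E c w γ) (hvu : v ≠ u) (hwu : w ≠ u)
    (hRv : (kempeGraph E c α γ).Reachable u v) (hRw : (kempeGraph E c α γ).Reachable u w) :
    v = w := by
  classical
  have hdeg x := degree_kempeGraph_le (α := α) (γ := γ) hE hP x
  refine hRv.eq_of_degree_le_one (finite_supp_kempeGraph u)
    (fun x => (hdeg x).trans ((card_filter_le _ _).trans card_le_two))
    ((hdeg u).trans ((card_le_card ?_).trans (card_singleton γ).le))
    ((hdeg v).trans ((card_le_card ?_).trans (card_singleton α).le))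
    ((hdeg w).trans ((card_le_card ?_).trans (card_singleton α).le)) hvu hwu hRw
  all_goals intro δ; simp only [mem_filter, mem_insert, mem_singleton]; grind

end KempeChain

section Counting

variable [Fintype κ]

open Classical in
variable (E) in
noncomputable def freeColors (c : ι → Option κ) (x : V) : Finset κ :=
  {δ | Free E c x δ}

theorem mem_freeColors : δ ∈ freeColors E c x ↔ Free E c x δ := by
  simp [freeColors]

variable [Fintype ι] [DecidableEq V] {Δ : ℕ}

theorem card_le_card_freeColors_add [DecidableEq κ] :
    Fintype.card κ ≤ #(freeColors E c x) + #{i | x ∈ E i ∧ c i ≠ none} := by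
  have key : #(freeColors E c x)ᶜ ≤ #{i | x ∈ E i ∧ c i ≠ none} := by
    refine card_le_card_of_forall_subsingleton (fun δ i => c i = some δ) (fun δ hδ => ?_)
      (fun i _ δ₁ h₁ δ₂ h₂ => Option.some_inj.mp (h₁.2.symm.trans h₂.2))
    rw [mem_compl, mem_freeColors] at hδ
    simp only [Free, not_forall, not_not] at hδ
    obtain ⟨i, hi, hc⟩ := hδ
    exact ⟨i, by simp [hi, hc], hc⟩
  rw [card_compl] at key
  have := card_le_univ (freeColors E c x)
  omega

theorem card_le_card_freeColors_add_degree (hdeg : #{i | x ∈ E i} ≤ Δ) :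
    Fintype.card κ ≤ #(freeColors E c x) + Δ := by
  classical
  exact card_le_card_freeColors_add.trans (Nat.add_le_add_left
    ((card_le_card (monotone_filter_right _ fun _ _ h => h.1)).trans hdeg) _)

theorem card_lt_card_freeColors_add_degree (hdeg : #{i | x ∈ E i} ≤ Δ) (hx : x ∈ E e)
    (he : c e = none) : Fintype.card κ < #(freeColors E c x) + Δ := by
  classical
  have hlt : #{i | x ∈ E i ∧ c i ≠ none} < #{i | x ∈ E i} :=
    card_lt_card ((ssubset_iff_of_subset (monotone_filter_right _ fun _ _ h => h.1)).mpr
      ⟨e, by simp [hx], by simp [he]⟩)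
  have := card_le_card_freeColors_add (E := E) (c := c) (x := x)
  omega

end Counting

section Shannon

variable [Fintype ι] [DecidableEq ι] [DecidableEq V] [Fintype κ] [DecidableEq κ] {α β : κ}

theorem improvable_or_disjoint_freeColors (hE : ∀ i, #(E i) = 2) (hP : Proper E c)
    (hEe : E e = {u, v}) (he : c e = none) (hEf : E f = {u, w}) (hcf : c f = some β)
    (hβ : Free E c v β) (hα : Free E c u α)
    (huv : Disjoint (freeColors E c u) (freeColors E c v)) :
    Improvable E c ∨ Disjoint (freeColors E c u) (freeColors E c w) ∧
      Disjoint (freeColors E c v) (freeColors E c w) := by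
  have hvu : v ≠ u := by rintro rfl; simpa [hEe] using hE e
  have hwu : w ≠ u := by rintro rfl; simpa [hEf] using hE f
  have hfe : f ≠ e := by rintro rfl; simp [he] at hcf
  have hwv : w ≠ v := by rintro rfl; exact hβ f (by simp [hEf]) hcf
  have hwe : w ∉ E e := by simp [hEe, hwu, hwv]
  set c₂ := update (update c f none) e (some β)
  have hP₂ : Proper E c₂ := (hP.update_none f).update_some hEe
    (free_update_none_of_mem hP (by simp [hEf]) hcf) (hβ.update (by simp))
  have hc₂f : c₂ f = none := by simp [c₂, hfe]
  have hle : #(uncolored c₂) ≤ #(uncolored c) := Nat.lt_succ_iff.mp <|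
    (card_uncolored_update_some_lt (by simp [he, hfe.symm])).trans_le card_uncolored_update_none_le
  have hFu (δ) (h : Free E c u δ) : Free E c₂ u δ :=
    (h.update (by simp)).update fun _ hβδ => h f (by simp [hEf]) (hcf.trans hβδ)
  have hFw (δ) (h : Free E c w δ) : Free E c₂ w δ :=
    (h.update (by simp)).update fun h => absurd h hwe
  by_cases huw : Disjoint (freeColors E c u) (freeColors E c w)
  swap
  · obtain ⟨δ, hδu, hδw⟩ := not_disjoint_iff.mp huw
    exact .inl ((improvable_of_free hP₂ hEf hc₂f (hFu δ (mem_freeColors.mp hδu))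
      (hFw δ (mem_freeColors.mp hδw))).of_card_uncolored_le hle)
  by_cases hvw : Disjoint (freeColors E c v) (freeColors E c w)
  · exact .inr ⟨huw, hvw⟩
  obtain ⟨γ, hγv, hγw⟩ := not_disjoint_iff.mp hvw
  rw [mem_freeColors] at hγv hγw
  have hγβ : γ ≠ β := by rintro rfl; exact hγw f (by simp [hEf]) hcf
  have hαβ : α ≠ β := by
    rintro rfl; exact disjoint_left.mp huv (mem_freeColors.mpr hα) (mem_freeColors.mpr hβ)
  have hG : kempeGraph E c₂ α γ ≤ kempeGraph E c α γ :=
    (kempeGraph_update_le (by simpa using hαβ.symm) (by simpa using hγβ.symm)).trans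
      (kempeGraph_update_le (by simp) (by simp))
  left
  by_cases hRv : (kempeGraph E c α γ).Reachable u v
  · by_cases hRw : (kempeGraph E c₂ α γ).Reachable u w
    · exact absurd (eq_of_reachable_kempeGraph hE hP hα hγv hγw hvu hwu hRv (hRw.mono hG))
        hwv.symm
    · exact (improvable_of_not_reachable hP₂ hEf hc₂f (hFu α hα) (hFw γ hγw) hRw
        ).of_card_uncolored_le hle
  · exact improvable_of_not_reachable hP hEe he hα hγv hRv

theorem improvable_of_uncolored {Δ : ℕ} (hE : ∀ i, #(E i) = 2)
    (hdeg : ∀ x, #{i | x ∈ E i} ≤ Δ) (hκ : 3 * Δ ≤ 2 * Fintype.card κ + 1) (hP : Proper E c)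
    (he : c e = none) : Improvable E c := by
  obtain ⟨u, v, -, hEe⟩ := card_eq_two.mp (hE e)
  have hFu := card_lt_card_freeColors_add_degree (hdeg u) (by simp [hEe]) he
  have hFv := card_lt_card_freeColors_add_degree (hdeg v) (by simp [hEe]) he
  by_cases huv : Disjoint (freeColors E c u) (freeColors E c v)
  swap
  · obtain ⟨δ, hδu, hδv⟩ := not_disjoint_iff.mp huv
    exact improvable_of_free hP hEe he (mem_freeColors.mp hδu) (mem_freeColors.mp hδv)
  obtain ⟨α, hα⟩ : (freeColors E c u).Nonempty := card_pos.mp (by omega)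
  obtain ⟨β, hβ⟩ : (freeColors E c v).Nonempty := card_pos.mp (by omega)
  obtain ⟨f, hf, hcf⟩ : ∃ f, u ∈ E f ∧ c f = some β := by
    simpa [mem_freeColors, Free] using disjoint_right.mp huv hβ
  obtain ⟨w, hEf⟩ := exists_eq_pair_of_card_eq_two (hE f) hf
  have hFw := card_le_card_freeColors_add_degree (c := c) (hdeg w)
  obtain h | ⟨huw, hvw⟩ := improvable_or_disjoint_freeColors hE hP hEe he hEf hcf
    (mem_freeColors.mp hβ) (mem_freeColors.mp hα) huv
  · exact h
  · have := card_le_univ (freeColors E c u ∪ freeColors E c v ∪ freeColors E c w)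
    rw [card_union_of_disjoint (disjoint_union_left.mpr ⟨huw, hvw⟩),
      card_union_of_disjoint huv] at this
    omega

end Shannon

theorem exists_proper_forall_ne_none [Fintype ι] [DecidableEq V] [Fintype κ] {Δ : ℕ}
    (hE : ∀ i, #(E i) = 2) (hdeg : ∀ x, #{i | x ∈ E i} ≤ Δ)
    (hκ : 3 * Δ ≤ 2 * Fintype.card κ + 1) :
    ∃ c : ι → Option κ, Proper E c ∧ ∀ i, c i ≠ none := by
  classical
  obtain ⟨c, hc, hmin⟩ := (univ.filter (Proper (κ := κ) E)).exists_min_image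
    (fun c => #(uncolored c)) ⟨_, mem_filter.mpr ⟨mem_univ _, proper_none⟩⟩
  rw [mem_filter] at hc
  refine ⟨c, hc.2, fun e he => ?_⟩
  obtain ⟨c', hP', hlt⟩ := improvable_of_uncolored hE hdeg hκ hc.2 he
  exact (hmin c' (mem_filter.mpr ⟨mem_univ _, hP'⟩)).not_gt hlt

theorem exists_edgeColoring [Fintype ι] [DecidableEq V] [Fintype κ] {Δ : ℕ}
    (hE : ∀ i, #(E i) = 2) (hdeg : ∀ x, #{i | x ∈ E i} ≤ Δ)
    (hκ : 3 * Δ ≤ 2 * Fintype.card κ + 1) :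
    ∃ d : ι → κ, ∀ i j, i ≠ j → (E i ∩ E j).Nonempty → d i ≠ d j := by
  obtain ⟨c, hP, hc⟩ := exists_proper_forall_ne_none hE hdeg hκ
  choose d hd using fun i => Option.ne_none_iff_exists'.mp (hc i)
  refine ⟨d, fun i j hij ⟨x, hx⟩ hdij => hij ?_⟩
  rw [mem_inter] at hx
  exact hP hx.1 hx.2 (hd i) (by rw [hd j, hdij])

end EdgeColoring

theorem stmt_9_general {V : Type*} [DecidableEq V] {ι : Type*} [Fintype ι]
    (Δ : ℕ)
    (E : ι → Finset V)
    (huniform : ∀ i, (E i).card = 2)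
    (hdeg : ∀ v : V, (Finset.univ.filter (fun i : ι => v ∈ E i)).card ≤ Δ) :
    sInf {n : ℕ | ∃ c : ι → Fin n,
        ∀ i j : ι, i ≠ j → (E i ∩ E j).Nonempty → c i ≠ c j}
      ≤ 3 * Δ / 2 :=
  Nat.sInf_le (EdgeColoring.exists_edgeColoring huniform hdeg (by rw [Fintype.card_fin]; omega))

/-- Shannon's theorem: a multigraph (2-uniform multihypergraph) of maximum
degree at most Δ has chromatic index at most ⌊3Δ/2⌋. -/
theorem stmt_9 {V : Type*} [DecidableEq V] {ι : Type*} [Fintype ι] [DecidableEq ι]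
    (Δ : ℕ)
    (E : ι → Finset V)
    (huniform : ∀ i, (E i).card = 2)
    (hdeg : ∀ v : V, (Finset.univ.filter (fun i : ι => v ∈ E i)).card ≤ Δ) :
    sInf {n : ℕ | ∃ c : ι → Fin n,
        ∀ i j : ι, i ≠ j → (E i ∩ E j).Nonempty → c i ≠ c j}
      ≤ 3 * Δ / 2 :=
  stmt_9_general Δ E huniform hdeg
end

section
/- Let Δ ≥ 2 and let H be the complete bipartite graph K_{Δ,Δ} with one edge xy removed, where x and y are the two vertices of degree Δ−1 (on opposite sides). Then in every proper edge-colouring φ of H using exactly Δ colours, the set of colours on edges incident to x equals the set of colours on edges incident to y. -/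
/-- Let H be K_{Δ,Δ} minus the edge xy (left vertex x, right vertex y), with
Δ ≥ 2.  In every proper edge-colouring of H with Δ colours, the set of colours
appearing at x equals the set of colours appearing at y.  Here an edge of H is
a pair (a,b) ≠ (x,y), and φ a b is its colour. -/
theorem stmt_10 (Δ : ℕ) (hΔ : 2 ≤ Δ) (x y : Fin Δ)
    (φ : Fin Δ → Fin Δ → Fin Δ)
    (hrow : ∀ a b b' : Fin Δ, (a, b) ≠ (x, y) → (a, b') ≠ (x, y) → b ≠ b' →
      φ a b ≠ φ a b')
    (hcol : ∀ a a' b : Fin Δ, (a, b) ≠ (x, y) → (a', b) ≠ (x, y) → a ≠ a' →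
      φ a b ≠ φ a' b) :
    (Finset.univ.filter (fun b : Fin Δ => b ≠ y)).image (fun b => φ x b)
      = (Finset.univ.filter (fun a : Fin Δ => a ≠ x)).image (fun a => φ a y) := by
  classical
  -- injectivity of φ a on full row for a ≠ x
  have hinjA : ∀ a : Fin Δ, a ≠ x → Function.Injective (φ a) := by
    intro a ha b b' h
    by_contra hne
    exact hrow a b b' (by simp [Prod.ext_iff, ha]) (by simp [Prod.ext_iff, ha]) hne h
  -- cardinalities
  have hcardL :
      ((Finset.univ.filter (fun b : Fin Δ => b ≠ y)).image (fun b => φ x b)).card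
        = Δ - 1 := by
    rw [Finset.card_image_of_injOn]
    · simp [Finset.filter_ne']
    · intro b hb b' hb' h
      simp only [Finset.coe_filter, Set.mem_setOf_eq, Finset.mem_univ, true_and] at hb hb'
      by_contra hne
      exact hrow x b b' (by simp [Prod.ext_iff, hb]) (by simp [Prod.ext_iff, hb']) hne h
  have hcardR :
      ((Finset.univ.filter (fun a : Fin Δ => a ≠ x)).image (fun a => φ a y)).card
        = Δ - 1 := by
    rw [Finset.card_image_of_injOn]
    · simp [Finset.filter_ne']
    · intro a ha a' ha' h
      simp only [Finset.coe_filter, Set.mem_setOf_eq, Finset.mem_univ, true_and] at ha ha'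
      by_contra hne
      exact hcol a a' y (by simp [Prod.ext_iff, ha]) (by simp [Prod.ext_iff, ha']) hne h
  -- left ⊆ right
  have hsub :
      (Finset.univ.filter (fun b : Fin Δ => b ≠ y)).image (fun b => φ x b)
        ⊆ (Finset.univ.filter (fun a : Fin Δ => a ≠ x)).image (fun a => φ a y) := by
    intro c hc
    simp only [Finset.mem_image, Finset.mem_filter, Finset.mem_univ, true_and] at hc ⊢
    obtain ⟨b, hb, hbc⟩ := hc
    by_contra hnot
    push_neg at hnot
    -- for each a ≠ x there's a b with φ a b = c
    have hsurjA : ∀ a : Fin Δ, a ≠ x → ∃ b, φ a b = c := fun a ha =>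
      (Finite.injective_iff_surjective.mp (hinjA a ha)) c
    set g : Fin Δ → Fin Δ := fun a =>
      if h : a = x then b else Classical.choose (hsurjA a h) with hg
    have hgval : ∀ a : Fin Δ, φ a (g a) = c := by
      intro a
      by_cases h : a = x
      · subst h; simp [hg, hbc]
      · simp only [hg, dif_neg h]; exact Classical.choose_spec (hsurjA a h)
    have hgx : g x = b := by simp [hg]
    have hginj : Function.Injective g := by
      intro a a' h
      by_contra hne
      have h1 : (a, g a) ≠ (x, y) := by
        by_cases hax : a = x
        · subst hax; simp [hgx, hb]
        · simp [Prod.ext_iff, hax]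
      have h2 : (a', g a) ≠ (x, y) := by
        by_cases hax : a' = x
        · subst hax; rw [h, hgx]; simp [hb]
        · simp [Prod.ext_iff, hax]
      exact hcol a a' (g a) h1 h2 hne (by rw [hgval a, h, hgval a'])
    obtain ⟨a, ha⟩ := (Finite.injective_iff_surjective.mp hginj) y
    by_cases hax : a = x
    · subst hax; rw [hgx] at ha; exact hb ha
    · exact hnot a hax (by rw [← ha, hgval a])
  exact Finset.eq_of_subset_of_card_le hsub (by omega)
end

section
/- For every Δ ≥ 2, there exist graphs G₁ and G₂ with Δ(G₁) = Δ(G₂) = Δ, χ'(G₁) = χ'(G₂) = Δ, and G₁ ∪ G₂ bipartite, such that the simultaneous chromatic index χ'(G₁,G₂) is at least Δ+1; i.e., no single edge-colouring of G₁ ∪ G₂ using Δ colours is simultaneously a proper edge-colouring of G₁ and of G₂. -/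
/-!
Let `α` be the colour of `xy`. At `y` both graphs have degree `Δ` and share the edges `x_i y`,
`i ≠ 0`, so in `G₁` the colour `α` must sit on the pendant edge `by`. Each `x_i` has degree `Δ` in
`G₁`, so it sees `α` there too, but neither on `ax` (which meets `xy` in `G₂`) nor on `x_i y`
(which meets `by`). Hence the `α`-edges of `G₁` match all of `X` into `Y \ {y}`, which is too
small. The other properties come from explicit `Δ`-colourings and a vertex of degree `Δ`, since
a proper colouring is injective on the edges at each vertex.
-/

/-- An edge-colouring (with colours in `Fin n`, assigned to elements of
`Sym2 V`) is proper for a simple graph `G` if distinct edges of `G` sharing a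
vertex receive distinct colours. -/
def IsProperEdgeColoring {V : Type*} {n : ℕ} (G : SimpleGraph V)
    (c : Sym2 V → Fin n) : Prop :=
  ∀ e ∈ G.edgeSet, ∀ f ∈ G.edgeSet, e ≠ f → (∃ v, v ∈ e ∧ v ∈ f) → c e ≠ c f


open Function SimpleGraph

namespace IsProperEdgeColoring

variable {V : Type*} {n : ℕ} {G : SimpleGraph V} {c : Sym2 V → Fin n}

theorem color_ne (hc : IsProperEdgeColoring G c) {v w w' : V} (hw : G.Adj v w)
    (hw' : G.Adj v w') (hne : w ≠ w') : c s(v, w) ≠ c s(v, w') :=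
  hc _ hw _ hw' (fun h => hne (Sym2.congr_right.mp h))
    ⟨v, Sym2.mem_mk_left _ _, Sym2.mem_mk_left _ _⟩

theorem injective_color_mk (hc : IsProperEdgeColoring G c) {ι : Type*} {v : V} {f : ι → V}
    (hf : Injective f) (hadj : ∀ k, G.Adj v (f k)) : Injective fun k => c s(v, f k) :=
  fun _ _ h => by_contra fun hne => hc.color_ne (hadj _) (hadj _) (hf.ne hne) h

theorem card_le (hc : IsProperEdgeColoring G c) {ι : Type*} [Fintype ι] {v : V} {f : ι → V}
    (hf : Injective f) (hadj : ∀ k, G.Adj v (f k)) : Fintype.card ι ≤ n := by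
  simpa using Fintype.card_le_of_injective _ (hc.injective_color_mk hf hadj)

theorem exists_adj_color_eq (hc : IsProperEdgeColoring G c) {v : V} {f : Fin n → V}
    (hf : Injective f) (hadj : ∀ k, G.Adj v (f k)) (m : Fin n) :
    ∃ w, G.Adj v w ∧ c s(v, w) = m := by
  obtain ⟨k, hk⟩ := Finite.injective_iff_surjective.mp (hc.injective_color_mk hf hadj) m
  exact ⟨f k, hadj k, hk⟩

theorem degree_le (hc : IsProperEdgeColoring G c) (v : V) [Fintype (G.neighborSet v)] :
    G.degree v ≤ n := by
  rw [← card_neighborSet_eq_degree]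
  exact hc.card_le Subtype.val_injective fun w => w.2

theorem maxDegree_le [Fintype V] [DecidableRel G.Adj] (hc : IsProperEdgeColoring G c) :
    G.maxDegree ≤ n :=
  maxDegree_le_of_forall_degree_le _ _ fun v => hc.degree_le v

theorem maxDegree_eq [Fintype V] [DecidableRel G.Adj] (hc : IsProperEdgeColoring G c) {v : V}
    {f : Fin n → V} (hf : Injective f) (hadj : ∀ k, G.Adj v (f k)) : G.maxDegree = n := by
  refine hc.maxDegree_le.antisymm (le_trans ?_ (G.degree_le_maxDegree v))
  have := Fintype.card_le_of_injective (fun k => (⟨f k, hadj k⟩ : G.neighborSet v))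
    fun _ _ h => hf (congrArg Subtype.val h)
  rwa [Fintype.card_fin, card_neighborSet_eq_degree] at this

theorem sInf_eq (hc : IsProperEdgeColoring G c) {v : V} {f : Fin n → V} (hf : Injective f)
    (hadj : ∀ k, G.Adj v (f k)) :
    sInf {m : ℕ | ∃ c : Sym2 V → Fin m, IsProperEdgeColoring G c} = n := by
  have hn : n ∈ {m : ℕ | ∃ c : Sym2 V → Fin m, IsProperEdgeColoring G c} := ⟨c, hc⟩
  refine (Nat.sInf_le hn).antisymm (le_csInf ⟨n, hn⟩ ?_)
  rintro m ⟨c', hc'⟩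
  simpa using hc'.card_le hf hadj

end IsProperEdgeColoring

namespace SimpleGraph

variable {α β : Type*}

def fromBipartiteRel (r : α → β → Prop) : SimpleGraph (α ⊕ β) where
  Adj
    | .inl p, .inr q | .inr q, .inl p => r p q
    | _, _ => False
  symm := ⟨by rintro (_ | _) (_ | _) h <;> exact h⟩
  loopless := ⟨by rintro (_ | _) h <;> exact h⟩

variable {r : α → β → Prop}

@[simp] theorem fromBipartiteRel_adj_inl_inr {p : α} {q : β} :
    (fromBipartiteRel r).Adj (.inl p) (.inr q) ↔ r p q := Iff.rfl

@[simp] theorem fromBipartiteRel_adj_inr_inl {p : α} {q : β} :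
    (fromBipartiteRel r).Adj (.inr q) (.inl p) ↔ r p q := Iff.rfl

@[simp] theorem not_fromBipartiteRel_adj_inl_inl {p p' : α} :
    ¬(fromBipartiteRel r).Adj (.inl p) (.inl p') := id

@[simp] theorem not_fromBipartiteRel_adj_inr_inr {q q' : β} :
    ¬(fromBipartiteRel r).Adj (.inr q) (.inr q') := id

theorem fromBipartiteRel_le_completeBipartiteGraph :
    fromBipartiteRel r ≤ completeBipartiteGraph α β := by
  rintro (_ | _) (_ | _) h <;> simp_all

theorem exists_eq_of_mem_edgeSet_fromBipartiteRel {e : Sym2 (α ⊕ β)}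
    (he : e ∈ (fromBipartiteRel r).edgeSet) : ∃ p q, r p q ∧ e = s(.inl p, .inr q) := by
  induction e using Sym2.ind with
  | _ u v => rcases u with p | q <;> rcases v with p' | q' <;> simp_all [Sym2.eq_swap]

variable {n : ℕ} [NeZero n]

def bipartiteEdgeColoring (g : α → β → Fin n) : Sym2 (α ⊕ β) → Fin n :=
  Sym2.lift ⟨fun
    | .inl p, .inr q | .inr q, .inl p => g p q
    | _, _ => 0, by rintro (_ | _) (_ | _) <;> rfl⟩

@[simp] theorem bipartiteEdgeColoring_mk (g : α → β → Fin n) (p : α) (q : β) :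
    bipartiteEdgeColoring g s(.inl p, .inr q) = g p q := rfl

theorem isProperEdgeColoring_bipartiteEdgeColoring {g : α → β → Fin n}
    (hleft : ∀ p q q', r p q → r p q' → g p q = g p q' → q = q')
    (hright : ∀ p p' q, r p q → r p' q → g p q = g p' q → p = p') :
    IsProperEdgeColoring (fromBipartiteRel r) (bipartiteEdgeColoring g) := by
  rintro e he f hf hne ⟨v, hve, hvf⟩ hcol
  obtain ⟨p, q, hpq, rfl⟩ := exists_eq_of_mem_edgeSet_fromBipartiteRel he
  obtain ⟨p', q', hpq', rfl⟩ := exists_eq_of_mem_edgeSet_fromBipartiteRel hf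
  simp only [bipartiteEdgeColoring_mk] at hcol
  rw [Sym2.mem_iff] at hve hvf
  rcases hve with rfl | rfl <;> rcases hvf with h | h <;> cases h
  · exact hne (by rw [hleft _ _ _ hpq hpq' hcol])
  · exact hne (by rw [hright _ _ _ hpq hpq' hcol])

end SimpleGraph

namespace SimultaneousEdgeColoring

variable {Δ : ℕ} [NeZero Δ]

variable (Δ) in
/-- `x i = inl (some i)`, `b = inl none`, `y j = inr (some j)`, `a = inr none`, with `x = x 0` and
`y = y 0`: putting `b` beside `X` and `a` beside `Y` makes both graphs bipartite by construction. -/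
abbrev Vertex : Type := Option (Fin Δ) ⊕ Option (Fin Δ)

def rel₁ : Option (Fin Δ) → Option (Fin Δ) → Prop
  | some i, some j => i ≠ 0 ∨ j ≠ 0
  | some i, none => i = 0
  | none, some j => j = 0
  | none, none => False

def rel₂ : Option (Fin Δ) → Option (Fin Δ) → Prop
  | some _, some j => j = 0
  | some i, none => i = 0
  | none, _ => False

variable (Δ) in
def G₁ : SimpleGraph (Vertex Δ) := fromBipartiteRel rel₁

variable (Δ) in
def G₂ : SimpleGraph (Vertex Δ) := fromBipartiteRel rel₂

/-- The `j`-th neighbour of `x i` (and, `rel₁` being symmetric, of `y i`) in `G₁`: `y j`, except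
that the deleted neighbour `y 0` of `x 0` is replaced by the pendant vertex. -/
def nbr₁ (i j : Fin Δ) : Option (Fin Δ) := if i = 0 ∧ j = 0 then none else some j

theorem nbr₁_injective (i : Fin Δ) : Injective (nbr₁ i) := by
  intro j j'
  unfold nbr₁
  split_ifs <;> simp_all

theorem G₁_adj_inl_nbr₁ (i j : Fin Δ) : (G₁ Δ).Adj (.inl (some i)) (.inr (nbr₁ i j)) := by
  unfold nbr₁
  split_ifs <;> simp_all [G₁, rel₁, or_iff_not_imp_left]

theorem G₁_adj_inr_nbr₁ (i j : Fin Δ) : (G₁ Δ).Adj (.inr (some i)) (.inl (nbr₁ i j)) := by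
  unfold nbr₁
  split_ifs <;> simp_all [G₁, rel₁, or_iff_not_imp_left, imp_not_comm]

theorem G₂_adj_center (i : Fin Δ) : (G₂ Δ).Adj (.inr (some 0)) (.inl (some i)) := by
  simp [G₂, rel₂]

theorem G₂_adj_pendant : (G₂ Δ).Adj (.inl (some 0)) (.inr none) := by
  simp [G₂, rel₂]

/-- The Latin-square colouring `i + j` of `K_{Δ,Δ}`; the pendant edges take the colour `0` of the
deleted edge `xy`. -/
def color₁ (p q : Option (Fin Δ)) : Fin Δ := p.getD 0 + q.getD 0

def color₂ : Option (Fin Δ) → Option (Fin Δ) → Fin Δ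
  | some i, some _ => i
  | _, _ => 1

theorem isProperEdgeColoring_G₁ :
    IsProperEdgeColoring (G₁ Δ) (bipartiteEdgeColoring color₁) := by
  refine isProperEdgeColoring_bipartiteEdgeColoring ?_ ?_
  · rintro (_ | i) (_ | j) (_ | j') <;> grind [rel₁, color₁]
  · rintro (_ | i) (_ | i') (_ | j) <;> grind [rel₁, color₁]

theorem isProperEdgeColoring_G₂ (hΔ : 1 < Δ) :
    IsProperEdgeColoring (G₂ Δ) (bipartiteEdgeColoring color₂) := by
  have : (1 : Fin Δ) ≠ 0 := by simp [Fin.ext_iff, Nat.mod_eq_of_lt hΔ]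
  refine isProperEdgeColoring_bipartiteEdgeColoring ?_ ?_
  · rintro (_ | i) (_ | j) (_ | j') <;> grind [rel₂, color₂]
  · rintro (_ | i) (_ | i') (_ | j) <;> grind [rel₂, color₂]

theorem colorable_two_G₁_sup_G₂ : (G₁ Δ ⊔ G₂ Δ).Colorable 2 := by
  refine Colorable.mono_left (sup_le fromBipartiteRel_le_completeBipartiteGraph
    fromBipartiteRel_le_completeBipartiteGraph) ?_
  simpa using (CompleteBipartiteGraph.bicoloring _ _).colorable

theorem not_exists_simultaneous :
    ¬∃ c : Sym2 (Vertex Δ) → Fin Δ,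
      IsProperEdgeColoring (G₁ Δ) c ∧ IsProperEdgeColoring (G₂ Δ) c := by
  rintro ⟨c, h₁, h₂⟩
  set α := c s(.inr (some 0), .inl (some 0))
  have hb : c s(.inr (some 0), .inl none) = α := by
    obtain ⟨w, hw, hcw⟩ := h₁.exists_adj_color_eq
      (Sum.inl_injective.comp (nbr₁_injective 0)) (G₁_adj_inr_nbr₁ 0) α
    rcases w with (_ | i) | _
    · exact hcw
    · have hi : i ≠ 0 := by rintro rfl; simp [G₁, rel₁] at hw
      exact absurd hcw (h₂.color_ne (G₂_adj_center i) (G₂_adj_center 0) (by simpa using hi))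
    · exact (not_fromBipartiteRel_adj_inr_inr hw).elim
  have hx : ∀ i, ∃ j, j ≠ 0 ∧ c s(.inr (some j), .inl (some i)) = α := by
    intro i
    obtain ⟨w, hw, hcw⟩ := h₁.exists_adj_color_eq
      (Sum.inr_injective.comp (nbr₁_injective i)) (G₁_adj_inl_nbr₁ i) α
    rcases w with _ | (_ | j)
    · exact (not_fromBipartiteRel_adj_inl_inl hw).elim
    · obtain rfl : i = 0 := by simpa [G₁, rel₁] using hw
      have hxa := h₂.color_ne G₂_adj_pendant (G₂_adj_center 0).symm (by simp)
      rw [hcw, Sym2.eq_swap] at hxa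
      exact (hxa rfl).elim
    · refine ⟨j, ?_, by rwa [Sym2.eq_swap]⟩
      rintro rfl
      have hi : i ≠ 0 := by simpa [G₁, rel₁] using hw
      refine h₁.color_ne hw.symm (G₁_adj_inr_nbr₁ 0 0) (by simp [nbr₁]) ?_
      rw [Sym2.eq_swap, hcw]
      exact hb.symm
  choose W hW₀ hWα using hx
  have hW : Injective W := by
    intro i i' h
    by_contra hne
    have hadj : ∀ k, (G₁ Δ).Adj (.inr (some (W k))) (.inl (some k)) := fun k => by
      simp [G₁, rel₁, hW₀]
    refine h₁.color_ne (hadj i) (h ▸ hadj i') (by simpa using hne) ?_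
    rw [hWα, h, hWα]
  obtain ⟨i, hi⟩ := Finite.injective_iff_surjective.mp hW 0
  exact hW₀ i hi

end SimultaneousEdgeColoring

open SimultaneousEdgeColoring in
/-- For every Δ ≥ 2 there are graphs G₁, G₂ of maximum degree Δ and chromatic
index Δ whose union is bipartite, yet no Δ-edge-colouring is simultaneously
proper for both. -/
theorem stmt_11 (Δ : ℕ) (hΔ : 2 ≤ Δ) :
    ∃ (V : Type) (_ : Fintype V) (G₁ G₂ : SimpleGraph V)
      (_ : DecidableRel G₁.Adj) (_ : DecidableRel G₂.Adj),
      G₁.maxDegree = Δ ∧ G₂.maxDegree = Δ ∧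
      sInf {n : ℕ | ∃ c : Sym2 V → Fin n, IsProperEdgeColoring G₁ c} = Δ ∧
      sInf {n : ℕ | ∃ c : Sym2 V → Fin n, IsProperEdgeColoring G₂ c} = Δ ∧
      (G₁ ⊔ G₂).Colorable 2 ∧
      ¬ ∃ c : Sym2 V → Fin Δ,
          IsProperEdgeColoring G₁ c ∧ IsProperEdgeColoring G₂ c := by
  classical
  have : NeZero Δ := ⟨by omega⟩
  have hf₁ : Injective fun j => (.inr (nbr₁ 0 j) : Vertex Δ) :=
    Sum.inr_injective.comp (nbr₁_injective 0)
  have hf₂ : Injective fun i => (.inl (some i) : Vertex Δ) :=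
    Sum.inl_injective.comp (Option.some_injective _)
  exact ⟨Vertex Δ, inferInstance, G₁ Δ, G₂ Δ, inferInstance, inferInstance,
    isProperEdgeColoring_G₁.maxDegree_eq hf₁ (G₁_adj_inl_nbr₁ 0),
    (isProperEdgeColoring_G₂ hΔ).maxDegree_eq hf₂ G₂_adj_center,
    isProperEdgeColoring_G₁.sInf_eq hf₁ (G₁_adj_inl_nbr₁ 0),
    (isProperEdgeColoring_G₂ hΔ).sInf_eq hf₂ G₂_adj_center,
    colorable_two_G₁_sup_G₂, not_exists_simultaneous⟩
end

section
/- Let G₁ and G₂ be graphs of maximum degree at most 2 on a common vertex set, and suppose each edge e of G₁ ∪ G₂ has a list L(e) of at least 3 colours. Then there is an edge-colouring φ of G₁ ∪ G₂ with φ(e) ∈ L(e) for all e, whose restriction to G₁ is a proper edge-colouring of G₁ and whose restriction to G₂ is a proper edge-colouring of G₂. -/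
/-!
Call two edges of `G₁ ⊔ G₂` conflicting if they share a vertex and lie in a common `Gᵢ`.
Colouring greedily, always removing last an edge with few conflicts among the remaining ones,
succeeds as soon as every nonempty set of edges has a member conflicting with fewer edges of the
set than the size of its list. If a set contains an edge outside `G₁`, that edge conflicts only
with edges of `G₂` meeting it, at most two of them; otherwise the set lies in `G₁` and any of its
edges conflicts with at most two edges of `G₁`. So lists of size three suffice.
-/

/-- An edge-colouring is proper for a simple graph `G` if distinct edges of `G`
sharing a vertex receive distinct colours. -/
def IsProperEdgeColoring' {V : Type*} (G : SimpleGraph V)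
    (c : Sym2 V → ℕ) : Prop :=
  ∀ e ∈ G.edgeSet, ∀ f ∈ G.edgeSet, e ≠ f → (∃ v, v ∈ e ∧ v ∈ f) → c e ≠ c f

open Finset

namespace SimpleGraph

theorem exists_listColoring_of_forall_exists_card_lt {α β : Type*} [DecidableEq α]
    [DecidableEq β] [Nonempty β] (H : SimpleGraph α) [DecidableRel H.Adj] (L : α → Finset β)
    (s : Finset α)
    (hs : ∀ t ⊆ s, t.Nonempty → ∃ e ∈ t, #{f ∈ t | H.Adj e f} < #(L e)) :
    ∃ φ : α → β, (∀ e ∈ s, φ e ∈ L e) ∧ ∀ e ∈ s, ∀ f ∈ s, H.Adj e f → φ e ≠ φ f := by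
  induction s using Finset.strongInduction with
  | H s ih =>
  rcases s.eq_empty_or_nonempty with rfl | hne
  · exact ⟨fun _ => Classical.arbitrary β, by simp, by simp⟩
  obtain ⟨e, he, hcard⟩ := hs s subset_rfl hne
  obtain ⟨φ, hφL, hφ⟩ := ih (s.erase e) (erase_ssubset he)
    fun t ht => hs t (ht.trans (erase_subset e s))
  obtain ⟨c, hcL, hc⟩ : ∃ c ∈ L e, c ∉ image φ {f ∈ s | H.Adj e f} :=
    exists_mem_notMem_of_card_lt_card (card_image_le.trans_lt hcard)
  have hc' : ∀ f ∈ s, H.Adj e f → c ≠ φ f := fun f hf hef hcf =>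
    hc (mem_image.2 ⟨f, mem_filter.2 ⟨hf, hef⟩, hcf.symm⟩)
  refine ⟨Function.update φ e c, fun f hf => ?_, fun f hf g hg hfg => ?_⟩
  · rcases eq_or_ne f e with rfl | hfe
    · simpa using hcL
    · simpa [hfe] using hφL f (mem_erase.2 ⟨hfe, hf⟩)
  · rcases eq_or_ne f e with rfl | hfe
    · simpa [hfg.ne'] using hc' g hg hfg
    rcases eq_or_ne g e with rfl | hge
    · simpa [hfe] using (hc' f hf hfg.symm).symm
    simpa [hfe, hge] using hφ f (mem_erase.2 ⟨hfe, hf⟩) g (mem_erase.2 ⟨hge, hg⟩) hfg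

variable {V : Type*}

/-- `G.lineGraph` extended from `G.edgeSet` to all of `Sym2 V` by isolated vertices. -/
def edgeLineGraph (G : SimpleGraph V) : SimpleGraph (Sym2 V) where
  Adj e f := e ∈ G.edgeSet ∧ f ∈ G.edgeSet ∧ e ≠ f ∧ ∃ v, v ∈ e ∧ v ∈ f
  symm := ⟨fun _ _ ⟨he, hf, hne, v, hve, hvf⟩ => ⟨hf, he, hne.symm, v, hvf, hve⟩⟩
  loopless := ⟨fun _ h => h.2.2.1 rfl⟩

@[simp]
theorem edgeLineGraph_adj {G : SimpleGraph V} {e f : Sym2 V} :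
    G.edgeLineGraph.Adj e f ↔ e ∈ G.edgeSet ∧ f ∈ G.edgeSet ∧ e ≠ f ∧ ∃ v, v ∈ e ∧ v ∈ f :=
  Iff.rfl

theorem isProperEdgeColoring'_iff (G : SimpleGraph V) (φ : Sym2 V → ℕ) :
    IsProperEdgeColoring' G φ ↔ ∀ e f, G.edgeLineGraph.Adj e f → φ e ≠ φ f :=
  ⟨fun h _ _ hadj => h _ hadj.1 _ hadj.2.1 hadj.2.2.1 hadj.2.2.2,
    fun h _ he _ hf hne hvf => h _ _ ⟨he, hf, hne, hvf⟩⟩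

variable [Fintype V] [DecidableEq V]

theorem card_filter_edgeLineGraph_adj_le (G : SimpleGraph V) [DecidableRel G.Adj]
    [DecidableRel G.edgeLineGraph.Adj] {k : ℕ} (hd : ∀ v, G.degree v ≤ k)
    (t : Finset (Sym2 V)) (e : Sym2 V) :
    #{f ∈ t | G.edgeLineGraph.Adj e f} ≤ 2 * (k - 1) := by
  by_cases he : e ∈ G.edgeSet
  swap
  · simp [he]
  induction e with
  | _ u v =>
  have hsub : {f ∈ t | G.edgeLineGraph.Adj s(u, v) f} ⊆
      (G.incidenceFinset u).erase s(u, v) ∪ (G.incidenceFinset v).erase s(u, v) := by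
    intro f hf
    obtain ⟨-, -, hfG, hne, w, hw, hwf⟩ := mem_filter.1 hf
    rcases Sym2.mem_iff.1 hw with rfl | rfl
    · exact mem_union_left _ (mem_erase.2 ⟨hne.symm, (G.mem_incidenceFinset _ _).2 ⟨hfG, hwf⟩⟩)
    · exact mem_union_right _ (mem_erase.2 ⟨hne.symm, (G.mem_incidenceFinset _ _).2 ⟨hfG, hwf⟩⟩)
  have hu := card_erase_of_mem ((G.mem_incidenceFinset _ _).2 ⟨he, Sym2.mem_mk_left u v⟩)
  have hv := card_erase_of_mem ((G.mem_incidenceFinset _ _).2 ⟨he, Sym2.mem_mk_right u v⟩)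
  rw [card_incidenceFinset_eq_degree] at hu hv
  have := (card_le_card hsub).trans (card_union_le _ _)
  have := hd u
  have := hd v
  omega

theorem exists_mem_card_filter_sup_edgeLineGraph_adj_le {G₁ G₂ : SimpleGraph V}
    [DecidableRel G₁.Adj] [DecidableRel G₂.Adj]
    [DecidableRel (G₁.edgeLineGraph ⊔ G₂.edgeLineGraph).Adj] {k : ℕ}
    (hd₁ : ∀ v, G₁.degree v ≤ k) (hd₂ : ∀ v, G₂.degree v ≤ k) {t : Finset (Sym2 V)}
    (ht : t.Nonempty) :
    ∃ e ∈ t, #{f ∈ t | (G₁.edgeLineGraph ⊔ G₂.edgeLineGraph).Adj e f} ≤ 2 * (k - 1) := by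
  classical
  by_cases h : ∃ e ∈ t, e ∉ G₁.edgeSet
  · obtain ⟨e, he, he₁⟩ := h
    refine ⟨e, he, (card_le_card (monotone_filter_right t fun f _ hadj => ?_)).trans
      (card_filter_edgeLineGraph_adj_le G₂ hd₂ t e)⟩
    exact hadj.resolve_left fun h => he₁ h.1
  · push Not at h
    obtain ⟨e, he⟩ := ht
    refine ⟨e, he, (card_le_card (monotone_filter_right t fun f hft hadj => ?_)).trans
      (card_filter_edgeLineGraph_adj_le G₁ hd₁ t e)⟩
    rcases hadj with hadj | ⟨-, -, hadj⟩
    · exact hadj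
    · exact ⟨h e he, h f hft, hadj⟩

end SimpleGraph

open SimpleGraph

/-- If G₁, G₂ have maximum degree at most 2 and every edge of G₁ ∪ G₂ has a
list of at least 3 colours, then there is a colouring from the lists that is
simultaneously a proper edge-colouring of G₁ and of G₂. -/
theorem stmt_12 {V : Type*} [Fintype V] [DecidableEq V]
    (G₁ G₂ : SimpleGraph V)
    [DecidableRel G₁.Adj] [DecidableRel G₂.Adj]
    (hd₁ : ∀ v : V, G₁.degree v ≤ 2) (hd₂ : ∀ v : V, G₂.degree v ≤ 2)
    (L : Sym2 V → Finset ℕ)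
    (hL : ∀ e ∈ (G₁ ⊔ G₂).edgeSet, 3 ≤ (L e).card) :
    ∃ φ : Sym2 V → ℕ,
      (∀ e ∈ (G₁ ⊔ G₂).edgeSet, φ e ∈ L e) ∧
      IsProperEdgeColoring' G₁ φ ∧ IsProperEdgeColoring' G₂ φ := by
  classical
  have hdegenerate : ∀ t ⊆ (G₁ ⊔ G₂).edgeFinset, t.Nonempty →
      ∃ e ∈ t, #{f ∈ t | (G₁.edgeLineGraph ⊔ G₂.edgeLineGraph).Adj e f} < #(L e) := by
    intro t ht hne
    obtain ⟨e, he, hcard⟩ := exists_mem_card_filter_sup_edgeLineGraph_adj_le hd₁ hd₂ hne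
    have := hL e (mem_edgeFinset.1 (ht he))
    exact ⟨e, he, by omega⟩
  obtain ⟨φ, hφL, hφ⟩ :=
    exists_listColoring_of_forall_exists_card_lt _ L (G₁ ⊔ G₂).edgeFinset hdegenerate
  refine ⟨φ, fun e he => hφL e (mem_edgeFinset.2 he), ?_, ?_⟩ <;>
    rw [isProperEdgeColoring'_iff] <;> intro e f hadj
  · exact hφ e (by simp [hadj.1]) f (by simp [hadj.2.1]) (Or.inl hadj)
  · exact hφ e (by simp [hadj.1]) f (by simp [hadj.2.1]) (Or.inr hadj)
end

section
/- Let k and Δ be positive integers, and suppose there exists an intersecting hypergraph J on vertex set [k] with |E(J)| ≤ k admitting a fractional matching of size ν. Then there exist Δ-regular (up to rounding) stars G₁, ..., G_k with a common centre such that χ'(G₁,...,G_k) ≥ ν·Δ − k and Δ(Gᵢ) ≤ Δ for all i. -/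
/-- If there is an intersecting hypergraph J on [k] with at most k edges and a
fractional matching of size ν, then for every Δ there exist stars G₁,…,G_k with
a common centre (given by their leaf sets S 1,…,S k) of maximum degree at most
Δ whose simultaneous chromatic index is at least ν·Δ − k. -/
theorem stmt_14 (k Δ : ℕ) (hk : 0 < k) (hΔ : 0 < Δ) (ν : ℝ)
    (J : Finset (Finset (Fin k)))
    (hJcard : J.card ≤ k)
    (hne : ∀ e ∈ J, e.Nonempty)
    (hint : ∀ e ∈ J, ∀ f ∈ J, (e ∩ f).Nonempty)
    (w : Finset (Fin k) → ℝ)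
    (hw : ∀ e ∈ J, w e ∈ Set.Icc (0 : ℝ) 1)
    (hdeg : ∀ v : Fin k, ∑ e ∈ J.filter (fun e => v ∈ e), w e ≤ 1)
    (hsize : ∑ e ∈ J, w e = ν) :
    ∃ (V : Type) (_ : Fintype V) (_ : DecidableEq V) (S : Fin k → Finset V),
      (∀ i : Fin k, (S i).card ≤ Δ) ∧
      ν * Δ - k ≤
        ((sInf {n : ℕ | ∃ c : V → Fin n,
            ∀ i : Fin k, ∀ u ∈ S i, ∀ u' ∈ S i, u ≠ u' → c u ≠ c u'} : ℕ) : ℝ) := by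
  classical
  set m : Finset (Fin k) → ℕ := fun e => ⌊w e * Δ⌋₊ with hm
  have hwnn : ∀ e ∈ J, (0:ℝ) ≤ w e * Δ := fun e he => by
    have := (hw e he).1; positivity
  have hmle : ∀ e ∈ J, (m e : ℝ) ≤ w e * Δ := fun e he => Nat.floor_le (hwnn e he)
  have hmlt : ∀ e ∈ J, w e * Δ < m e + 1 := fun e he => Nat.lt_floor_add_one _
  refine ⟨(e : {e // e ∈ J}) × Fin (m e.val), inferInstance, inferInstance,
    fun i => Finset.univ.filter (fun v => i ∈ v.1.val), ?_, ?_⟩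
  · intro i
    have hcard : ((Finset.univ.filter
        (fun v : (e : {e // e ∈ J}) × Fin (m e.val) => i ∈ v.1.val)).card : ℝ)
        = ∑ e ∈ J.attach, if i ∈ e.val then (m e.val : ℝ) else 0 := by
      rw [Finset.card_filter, ← Finset.univ_sigma_univ, Finset.sum_sigma]
      push_cast
      rw [Finset.univ_eq_attach]
      refine Finset.sum_congr rfl fun e _ => ?_
      by_cases h : i ∈ e.val <;> simp [h]
    have h1 : ((Finset.univ.filter
        (fun v : (e : {e // e ∈ J}) × Fin (m e.val) => i ∈ v.1.val)).card : ℝ)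
        ≤ (Δ : ℝ) := by
      rw [hcard]
      have : ∑ e ∈ J.attach, (if i ∈ e.val then (m e.val : ℝ) else 0)
          ≤ ∑ e ∈ J.attach, (if i ∈ e.val then w e.val * Δ else 0) := by
        refine Finset.sum_le_sum fun e _ => ?_
        by_cases h : i ∈ e.val <;> simp [h, hmle e.val e.2]
      refine this.trans ?_
      rw [Finset.sum_attach J (fun e => if i ∈ e then w e * Δ else 0),
        ← Finset.sum_filter]
      rw [← Finset.sum_mul]
      calc (∑ e ∈ J.filter (fun e => i ∈ e), w e) * Δ ≤ 1 * Δ := by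
            apply mul_le_mul_of_nonneg_right (hdeg i) (by positivity)
        _ = (Δ:ℝ) := one_mul _
    exact_mod_cast h1
  · set V := (e : {e // e ∈ J}) × Fin (m e.val)
    set T := {n : ℕ | ∃ c : V → Fin n,
        ∀ i : Fin k, ∀ u ∈ Finset.univ.filter (fun v : V => i ∈ v.1.val),
          ∀ u' ∈ Finset.univ.filter (fun v : V => i ∈ v.1.val), u ≠ u' → c u ≠ c u'}
    have hTne : (Fintype.card V) ∈ T := by
      refine ⟨Fintype.equivFin V, fun i u _ u' _ hne' => ?_⟩
      exact fun h => hne' ((Fintype.equivFin V).injective h)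
    have hlb : ∀ n ∈ T, Fintype.card V ≤ n := by
      rintro n ⟨c, hc⟩
      have hinj : Function.Injective c := by
        intro u u' h
        by_contra hneq
        obtain ⟨i, hi⟩ := hint u.1.val u.1.2 u'.1.val u'.1.2
        rw [Finset.mem_inter] at hi
        exact hc i u (Finset.mem_filter.2 ⟨Finset.mem_univ _, hi.1⟩)
          u' (Finset.mem_filter.2 ⟨Finset.mem_univ _, hi.2⟩) hneq h
      simpa using Fintype.card_le_of_injective c hinj
    have hinf : Fintype.card V ≤ sInf T := le_csInf ⟨_, hTne⟩ hlb
    have hcardV : (Fintype.card V : ℝ) = ∑ e ∈ J, (m e : ℝ) := by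
      rw [Fintype.card_sigma]
      push_cast
      rw [Finset.univ_eq_attach]
      simp [Finset.sum_attach J (fun e => (m e : ℝ))]
    have key : ν * Δ - k ≤ (Fintype.card V : ℝ) := by
      have h2 : ν * Δ ≤ ∑ e ∈ J, ((m e : ℝ) + 1) := by
        rw [← hsize, Finset.sum_mul]
        exact Finset.sum_le_sum fun e he => (hmlt e he).le
      rw [Finset.sum_add_distrib, Finset.sum_const, nsmul_eq_mul, mul_one] at h2
      have : (J.card : ℝ) ≤ k := by exact_mod_cast hJcard
      rw [hcardV]; linarith
    have hfin : ((Fintype.card V : ℕ) : ℝ) ≤ ((sInf T : ℕ) : ℝ) := Nat.cast_le.mpr hinf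
    exact key.trans hfin
end

section
/- Let G₁, G₂ be graphs on a common vertex set such that G₁ ∩ G₂ is Δ-regular and Δ(G₁), Δ(G₂) ≤ Δ. Then χ'(G₁, G₂) ≤ Δ + 2. -/
open SimpleGraph

section

variable {V : Type*} {n : ℕ} {G H : SimpleGraph V} {c c' : Sym2 V → Fin n}

theorem isProperEdgeColoring_iff :
    IsProperEdgeColoring G c ↔
      ∀ ⦃x y z⦄, G.Adj x y → G.Adj x z → c s(x, y) = c s(x, z) → y = z := by
  constructor
  · intro hc x y z hxy hxz hcol
    by_contra hyz
    exact hc _ hxy _ hxz (fun h ↦ hyz (Sym2.congr_right.mp h))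
      ⟨x, Sym2.mem_mk_left _ _, Sym2.mem_mk_left _ _⟩ hcol
  · rintro hc e he f hf hef ⟨x, hxe, hxf⟩ hcol
    obtain ⟨y, rfl⟩ := Sym2.mem_iff_exists.mp hxe
    obtain ⟨z, rfl⟩ := Sym2.mem_iff_exists.mp hxf
    exact hef (congrArg _ (hc he hf hcol))

theorem IsProperEdgeColoring.eq_of_adj (hc : IsProperEdgeColoring G c) {x y z : V}
    (hxy : G.Adj x y) (hxz : G.Adj x z) (hcol : c s(x, y) = c s(x, z)) : y = z :=
  isProperEdgeColoring_iff.mp hc hxy hxz hcol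

theorem IsProperEdgeColoring.of_le (hc : IsProperEdgeColoring G c) (hHG : H ≤ G) :
    IsProperEdgeColoring H c :=
  isProperEdgeColoring_iff.mpr fun _ _ _ hxy hxz ↦ hc.eq_of_adj (hHG hxy) (hHG hxz)

theorem IsProperEdgeColoring.congr (hc : IsProperEdgeColoring G c)
    (h : ∀ ⦃x y⦄, G.Adj x y → c s(x, y) = c' s(x, y)) : IsProperEdgeColoring G c' :=
  isProperEdgeColoring_iff.mpr fun _ _ _ hxy hxz hcol ↦
    hc.eq_of_adj hxy hxz (by rw [h hxy, h hxz, hcol])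

def IsFreeColor (G : SimpleGraph V) (c : Sym2 V → Fin n) (x : V) (a : Fin n) : Prop :=
  ∀ ⦃y⦄, G.Adj x y → c s(x, y) ≠ a

theorem IsFreeColor.of_le {x : V} {a : Fin n} (h : IsFreeColor G c x a) (hHG : H ≤ G) :
    IsFreeColor H c x a :=
  fun _ hxy ↦ h (hHG hxy)

theorem exists_isFreeColor [Fintype V] [DecidableRel G.Adj] {x : V} (hx : G.degree x < n) :
    ∃ a, IsFreeColor G c x a := by
  have hcard : ((G.neighborFinset x).image fun y ↦ c s(x, y)).card <
      (Finset.univ : Finset (Fin n)).card := by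
    simpa using Finset.card_image_le.trans_lt hx
  obtain ⟨a, -, ha⟩ := Finset.exists_mem_notMem_of_card_lt_card hcard
  exact ⟨a, fun y hxy hcol ↦ ha (Finset.mem_image.mpr ⟨y, by simpa using hxy, hcol⟩)⟩

theorem IsProperEdgeColoring.update_of_isFreeColor [DecidableEq V] {u v : V} {a : Fin n}
    (hc : IsProperEdgeColoring (G.deleteEdges {s(u, v)}) c)
    (hu : IsFreeColor (G.deleteEdges {s(u, v)}) c u a)
    (hv : IsFreeColor (G.deleteEdges {s(u, v)}) c v a) :
    IsProperEdgeColoring G (Function.update c s(u, v) a) := by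
  have free : ∀ ⦃x y⦄, s(x, y) = s(u, v) → IsFreeColor (G.deleteEdges {s(u, v)}) c x a := by
    intro x y h
    rcases Sym2.eq_iff.mp h with ⟨rfl, -⟩ | ⟨rfl, -⟩ <;> assumption
  refine isProperEdgeColoring_iff.mpr fun x y z hxy hxz hcol ↦ ?_
  by_cases hy : s(x, y) = s(u, v) <;> by_cases hz : s(x, z) = s(u, v)
  · exact Sym2.congr_right.mp (hy.trans hz.symm)
  · rw [Function.update_of_ne hz, hy, Function.update_self] at hcol
    exact absurd hcol.symm (free hy (deleteEdges_adj.mpr ⟨hxz, hz⟩))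
  · rw [Function.update_of_ne hy, hz, Function.update_self] at hcol
    exact absurd hcol (free hz (deleteEdges_adj.mpr ⟨hxy, hy⟩))
  · rw [Function.update_of_ne hy, Function.update_of_ne hz] at hcol
    exact hc.eq_of_adj (deleteEdges_adj.mpr ⟨hxy, hy⟩) (deleteEdges_adj.mpr ⟨hxz, hz⟩) hcol

theorem IsProperEdgeColoring.shift [DecidableEq V] {u v w : V}
    (hc : IsProperEdgeColoring (G.deleteEdges {s(u, v)}) c) (huw : G.Adj u w) (hvw : v ≠ w)
    (hv : IsFreeColor (G.deleteEdges {s(u, v)}) c v (c s(u, w))) :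
    IsProperEdgeColoring (G.deleteEdges {s(u, w)}) (Function.update c s(u, v) (c s(u, w))) := by
  have hle : (G.deleteEdges {s(u, w)}).deleteEdges {s(u, v)} ≤ G.deleteEdges {s(u, v)} :=
    fun _ _ h ↦ deleteEdges_adj.mpr ⟨(deleteEdges_adj.mp (deleteEdges_adj.mp h).1).1,
      (deleteEdges_adj.mp h).2⟩
  have huw' : (G.deleteEdges {s(u, v)}).Adj u w :=
    deleteEdges_adj.mpr ⟨huw, fun h ↦ hvw (Sym2.congr_right.mp h).symm⟩
  refine (hc.of_le hle).update_of_isFreeColor (fun z huz hcol ↦ ?_) (hv.of_le hle)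
  have hzw : z = w := hc.eq_of_adj (hle huz) huw' hcol
  exact (deleteEdges_adj.mp (deleteEdges_adj.mp huz).1).2 (by simp [hzw])

theorem IsFreeColor.shift [DecidableEq V] {u v w x : V} {a : Fin n} (hx : x ≠ v)
    (huw : G.Adj u w) (hvw : v ≠ w) (ha : IsFreeColor (G.deleteEdges {s(u, v)}) c x a) :
    IsFreeColor (G.deleteEdges {s(u, w)}) (Function.update c s(u, v) (c s(u, w))) x a := by
  intro z hxz
  by_cases h : s(x, z) = s(u, v)
  · obtain ⟨rfl, -⟩ : x = u ∧ z = v := by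
      rcases Sym2.eq_iff.mp h with h | h
      exacts [h, absurd h.1 hx]
    rw [h, Function.update_self]
    exact ha (deleteEdges_adj.mpr ⟨huw, fun h ↦ hvw (Sym2.congr_right.mp h).symm⟩)
  · rw [Function.update_of_ne h]
    exact ha (deleteEdges_adj.mpr ⟨(deleteEdges_adj.mp hxz).1, h⟩)

namespace SimpleGraph

theorem Connected.card_degree_le_one_le_two [Fintype V] [DecidableRel G.Adj] (hG : G.Connected)
    (hdeg : ∀ v, G.degree v ≤ 2) : (Finset.univ.filter fun v ↦ G.degree v ≤ 1).card ≤ 2 := by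
  have hedges : Fintype.card V ≤ G.edgeFinset.card + 1 := by
    have := hG.card_vert_le_card_edgeSet_add_one
    rwa [Nat.card_eq_fintype_card, Nat.card_eq_fintype_card, ← edgeFinset_card] at this
  have hsum : ∑ v, (G.degree v + if G.degree v ≤ 1 then 1 else 0) ≤ ∑ _v : V, 2 :=
    Finset.sum_le_sum fun v _ ↦ by have := hdeg v; split_ifs <;> omega
  rw [Finset.sum_add_distrib, sum_degrees_eq_twice_card_edges, Finset.sum_boole] at hsum
  simp only [Finset.sum_const, Finset.card_univ, smul_eq_mul, Nat.cast_id] at hsum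
  omega

theorem eq_of_reachable_of_degree_le_one [Fintype V] [DecidableRel G.Adj]
    (hdeg : ∀ v, G.degree v ≤ 2) {x y z : V} (hx : G.degree x ≤ 1) (hy : G.degree y ≤ 1)
    (hz : G.degree z ≤ 1) (hxy : G.Reachable x y) (hxz : G.Reachable x z) (hxy' : x ≠ y)
    (hxz' : x ≠ z) : y = z := by
  classical
  by_contra hyz
  set C := G.connectedComponentMk x
  have hC : (G.induce C.supp).Connected := C.connected_toSimpleGraph
  have hdegC : ∀ w : C.supp, (G.induce C.supp).degree w = G.degree w := fun w ↦
    degree_induce_of_neighborSet_subset fun w' hw' ↦ C.mem_supp_of_adj_mem_supp w.2 hw'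
  have hmem : ∀ {w}, G.Reachable x w → w ∈ C.supp := fun h ↦ ConnectedComponent.eq.mpr h.symm
  have hcard := hC.card_degree_le_one_le_two fun w ↦ (hdegC w).trans_le (hdeg w)
  have hsub : ({⟨x, hmem (Reachable.refl x)⟩, ⟨y, hmem hxy⟩, ⟨z, hmem hxz⟩} : Finset C.supp) ⊆
      Finset.univ.filter fun w ↦ (G.induce C.supp).degree w ≤ 1 := by
    intro w hw
    simp only [Finset.mem_insert, Finset.mem_singleton] at hw
    rcases hw with rfl | rfl | rfl <;> simpa [hdegC]
  have := Finset.card_le_card hsub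
  rw [Finset.card_eq_three.mpr ⟨_, _, _, by simpa, by simpa, by simpa, rfl⟩] at this
  omega

theorem adj_of_le_of_degree_le {x y : V} [Fintype (G.neighborSet x)]
    [Fintype (H.neighborSet x)] (hHG : H ≤ G) (hx : G.degree x ≤ H.degree x) (hxy : G.Adj x y) :
    H.Adj x y := by
  have hsub : H.neighborFinset x ⊆ G.neighborFinset x := fun w hw ↦ by
    simpa using hHG (by simpa using hw : H.Adj x w)
  have heq := Finset.eq_of_subset_of_card_le hsub (by simpa using hx)
  have hy : y ∈ H.neighborFinset x := by rw [heq]; simpa using hxy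
  simpa using hy

end SimpleGraph

section Kempe

variable {a b : Fin n} {u : V}

def kempeGraph (G : SimpleGraph V) (c : Sym2 V → Fin n) (a b : Fin n) : SimpleGraph V where
  Adj x y := G.Adj x y ∧ (c s(x, y) = a ∨ c s(x, y) = b)
  symm := ⟨fun x y h ↦ ⟨h.1.symm, by rw [Sym2.eq_swap]; exact h.2⟩⟩
  loopless := ⟨fun x h ↦ G.loopless.irrefl x h.1⟩

open Classical in
/-- The test looks at either endpoint: an edge of `G` meeting the `(a, b)`-chain through `u`
without lying on it has a colour other than `a` and `b`, which the swap fixes. -/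
noncomputable def kempeSwap (G : SimpleGraph V) (c : Sym2 V → Fin n) (a b : Fin n) (u : V)
    (e : Sym2 V) : Fin n :=
  if ∃ x ∈ e, (kempeGraph G c a b).Reachable u x then Equiv.swap a b (c e) else c e

open Classical in
theorem kempeSwap_apply {x y : V} (hxy : G.Adj x y) :
    kempeSwap G c a b u s(x, y) =
      if (kempeGraph G c a b).Reachable u x then Equiv.swap a b (c s(x, y)) else c s(x, y) := by
  by_cases hx : (kempeGraph G c a b).Reachable u x
  · rw [kempeSwap, if_pos ⟨x, Sym2.mem_mk_left x y, hx⟩, if_pos hx]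
  rw [kempeSwap, if_neg hx]
  split_ifs with h
  · obtain ⟨w, hw, hr⟩ := h
    obtain rfl : w = y := by
      rcases Sym2.mem_iff.mp hw with rfl | rfl
      exacts [absurd hr hx, rfl]
    refine Equiv.swap_apply_of_ne_of_ne (fun ha ↦ hx ?_) (fun hb ↦ hx ?_)
    exacts [hr.trans (Adj.reachable ⟨hxy.symm, Or.inl (by rwa [Sym2.eq_swap])⟩),
      hr.trans (Adj.reachable ⟨hxy.symm, Or.inr (by rwa [Sym2.eq_swap])⟩)]
  · rfl

theorem IsProperEdgeColoring.kempeSwap (hc : IsProperEdgeColoring G c) :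
    IsProperEdgeColoring G (kempeSwap G c a b u) := by
  refine isProperEdgeColoring_iff.mpr fun x y z hxy hxz hcol ↦ hc.eq_of_adj hxy hxz ?_
  rw [kempeSwap_apply hxy, kempeSwap_apply hxz] at hcol
  split_ifs at hcol
  exacts [(Equiv.swap a b).injective hcol, hcol]

open Classical in
theorem isFreeColor_kempeSwap_iff {x : V} {γ : Fin n} :
    IsFreeColor G (kempeSwap G c a b u) x γ ↔
      IsFreeColor G c x (if (kempeGraph G c a b).Reachable u x then Equiv.swap a b γ else γ) := by
  refine forall₂_congr fun y hxy ↦ ?_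
  rw [kempeSwap_apply hxy]
  split_ifs
  · rw [Ne, Ne, Equiv.swap_apply_eq_iff]
  · rfl

theorem IsFreeColor.kempeSwap_of_reachable {x : V} {γ : Fin n} (h : IsFreeColor G c x γ)
    (hx : (kempeGraph G c a b).Reachable u x) :
    IsFreeColor G (kempeSwap G c a b u) x (Equiv.swap a b γ) := by
  rwa [isFreeColor_kempeSwap_iff, if_pos hx, Equiv.swap_apply_self]

theorem IsFreeColor.kempeSwap_of_not_reachable {x : V} {γ : Fin n} (h : IsFreeColor G c x γ)
    (hx : ¬ (kempeGraph G c a b).Reachable u x) : IsFreeColor G (kempeSwap G c a b u) x γ := by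
  rwa [isFreeColor_kempeSwap_iff, if_neg hx]

theorem IsFreeColor.kempeSwap_of_ne {x : V} {γ : Fin n} (h : IsFreeColor G c x γ) (ha : γ ≠ a)
    (hb : γ ≠ b) : IsFreeColor G (kempeSwap G c a b u) x γ := by
  rw [isFreeColor_kempeSwap_iff]
  split_ifs
  · rwa [Equiv.swap_apply_of_ne_of_ne ha hb]
  · exact h

theorem degree_kempeGraph_le_card [Fintype V] [DecidableRel (kempeGraph G c a b).Adj]
    (hc : IsProperEdgeColoring G c) (x : V) {s : Finset (Fin n)}
    (hs : ∀ γ, (γ = a ∨ γ = b) → ¬ IsFreeColor G c x γ → γ ∈ s) :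
    (kempeGraph G c a b).degree x ≤ s.card := by
  rw [← card_neighborFinset_eq_degree]
  refine Finset.card_le_card_of_injOn (fun y ↦ c s(x, y)) (fun y hy ↦ ?_) fun y hy z hz hcol ↦ ?_
  · have hy : (kempeGraph G c a b).Adj x y := by simpa using hy
    exact hs _ hy.2 fun hfree ↦ hfree hy.1 rfl
  · have hy : (kempeGraph G c a b).Adj x y := by simpa using hy
    have hz : (kempeGraph G c a b).Adj x z := by simpa using hz
    exact hc.eq_of_adj hy.1 hz.1 hcol

theorem degree_kempeGraph_le_two [Fintype V] [DecidableRel (kempeGraph G c a b).Adj]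
    (hc : IsProperEdgeColoring G c) (x : V) : (kempeGraph G c a b).degree x ≤ 2 :=
  (degree_kempeGraph_le_card hc x (s := {a, b}) fun γ hγ _ ↦ by simpa using hγ).trans
    Finset.card_le_two

theorem degree_kempeGraph_le_one [Fintype V] [DecidableRel (kempeGraph G c a b).Adj]
    (hc : IsProperEdgeColoring G c) {x : V} (hx : IsFreeColor G c x a ∨ IsFreeColor G c x b) :
    (kempeGraph G c a b).degree x ≤ 1 := by
  rcases hx with hx | hx
  · refine degree_kempeGraph_le_card hc x (s := {b}) fun γ hγ hfree ↦ ?_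
    rcases hγ with rfl | rfl
    exacts [absurd hx hfree, Finset.mem_singleton_self _]
  · refine degree_kempeGraph_le_card hc x (s := {a}) fun γ hγ hfree ↦ ?_
    rcases hγ with rfl | rfl
    exacts [Finset.mem_singleton_self _, absurd hx hfree]

theorem not_reachable_kempeGraph_of_isFreeColor [Fintype V] (hc : IsProperEdgeColoring G c)
    {p w : V} (hu : IsFreeColor G c u a) (hp : IsFreeColor G c p b) (hw : IsFreeColor G c w b)
    (hup : u ≠ p) (huw : u ≠ w) (hpw : p ≠ w) (hr : (kempeGraph G c a b).Reachable u p) :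
    ¬ (kempeGraph G c a b).Reachable u w := by
  classical
  exact fun hr' ↦ hpw <| eq_of_reachable_of_degree_le_one (degree_kempeGraph_le_two hc)
    (degree_kempeGraph_le_one hc (Or.inl hu)) (degree_kempeGraph_le_one hc (Or.inr hp))
    (degree_kempeGraph_le_one hc (Or.inr hw)) hr hr' hup huw

theorem isChain_kempeSwap {L : List V} (hu : IsFreeColor G c u a)
    (hL : ∀ z ∈ L.tail, G.Adj u z ∧ c s(u, z) ≠ b)
    (h : L.IsChain fun x z ↦ IsFreeColor G c x (c s(u, z))) :
    L.IsChain fun x z ↦ IsFreeColor G (kempeSwap G c a b u) x (kempeSwap G c a b u s(u, z)) := by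
  refine h.imp_of_mem_tail_imp fun x z _ hz hxz ↦ ?_
  obtain ⟨huz, hb⟩ := hL z hz
  rw [kempeSwap_apply huz, if_pos (Reachable.refl u), Equiv.swap_apply_of_ne_of_ne (hu huz) hb]
  exact hxz.kempeSwap_of_ne (hu huz) hb

end Kempe

/-- Vizing's fan at `u` around the uncoloured edge `s(u, v)`. -/
structure IsFan (G : SimpleGraph V) (c : Sym2 V → Fin n) (u v : V) (l : List V) : Prop where
  nodup : (v :: l).Nodup
  adj : ∀ w ∈ v :: l, G.Adj u w
  isChain : (v :: l).IsChain fun x y ↦ IsFreeColor (G.deleteEdges {s(u, v)}) c x (c s(u, y))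

namespace IsFan

variable {u v y : V} {l l₁ l₂ : List V} {a b : Fin n}

theorem nil (huv : G.Adj u v) : IsFan G c u v [] :=
  ⟨List.nodup_singleton v, by simpa using huv, List.isChain_singleton v⟩

theorem of_append (hF : IsFan G c u v (l₁ ++ l₂)) : IsFan G c u v l₁ where
  nodup := (List.nodup_append.mp hF.nodup).1
  adj w hw := hF.adj w (List.mem_append_left _ hw)
  isChain := (List.isChain_append.mp hF.isChain).1

theorem append_singleton (hF : IsFan G c u v l) (huy : G.Adj u y) (hy : y ∉ v :: l)
    (hfree : IsFreeColor (G.deleteEdges {s(u, v)}) c ((v :: l).getLast (List.cons_ne_nil v l))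
      (c s(u, y))) :
    IsFan G c u v (l ++ [y]) where
  nodup := by
    rw [← List.cons_append]
    exact hF.nodup.append (List.nodup_singleton y) (by simpa using hy)
  adj w hw := by
    rw [← List.cons_append, List.mem_append, List.mem_singleton] at hw
    rcases hw with hw | rfl
    exacts [hF.adj w hw, huy]
  isChain := by
    rw [← List.cons_append, List.isChain_append]
    refine ⟨hF.isChain, List.isChain_singleton y, ?_⟩
    simpa [List.getLast?_eq_some_getLast (List.cons_ne_nil v l)] using hfree

theorem exists_maximal [Fintype V] (huv : G.Adj u v) :
    ∃ l, IsFan G c u v l ∧ ∀ y, G.Adj u y → y ∉ v :: l →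
      ¬ IsFreeColor (G.deleteEdges {s(u, v)}) c ((v :: l).getLast (List.cons_ne_nil v l))
        (c s(u, y)) := by
  by_contra! hext
  have hlong : ∀ k, ∃ l, IsFan G c u v l ∧ k ≤ l.length := by
    intro k
    induction k with
    | zero => exact ⟨[], nil huv, le_rfl⟩
    | succ k ih =>
      obtain ⟨l, hF, hk⟩ := ih
      obtain ⟨y, huy, hy, hfree⟩ := hext l hF
      exact ⟨l ++ [y], hF.append_singleton huy hy hfree, by simpa using hk⟩
  obtain ⟨l, hF, hl⟩ := hlong (Fintype.card V)
  have := hF.nodup.length_le_card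
  simp only [List.length_cons] at this
  omega

theorem adj_deleteEdges (hF : IsFan G c u v l) (hy : y ∈ l) :
    (G.deleteEdges {s(u, v)}).Adj u y :=
  deleteEdges_adj.mpr ⟨hF.adj y (List.mem_cons_of_mem _ hy),
    fun h ↦ (List.nodup_cons.mp hF.nodup).1 (Sym2.congr_right.mp h ▸ hy)⟩

theorem color_ne (hF : IsFan G c u v l) (hc : IsProperEdgeColoring (G.deleteEdges {s(u, v)}) c)
    {z : V} (hy : y ∈ l) (hz : z ∈ l) (hyz : y ≠ z) : c s(u, y) ≠ c s(u, z) :=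
  fun h ↦ hyz (hc.eq_of_adj (hF.adj_deleteEdges hy) (hF.adj_deleteEdges hz) h)

theorem isFreeColor_getLast (hF : IsFan G c u v (l₁ ++ y :: l₂)) :
    IsFreeColor (G.deleteEdges {s(u, v)}) c ((v :: l₁).getLast (List.cons_ne_nil v l₁))
      (c s(u, y)) := by
  have hchain := hF.isChain
  rw [← List.cons_append, List.isChain_append] at hchain
  simpa [List.getLast?_eq_some_getLast (List.cons_ne_nil v l₁)] using hchain.2.2

theorem exists_isProperEdgeColoring [DecidableEq V] (hF : IsFan G c u v l)
    (hc : IsProperEdgeColoring (G.deleteEdges {s(u, v)}) c)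
    (hu : IsFreeColor (G.deleteEdges {s(u, v)}) c u a)
    (hlast : IsFreeColor (G.deleteEdges {s(u, v)}) c ((v :: l).getLast (List.cons_ne_nil v l)) a) :
    ∃ c' : Sym2 V → Fin n, IsProperEdgeColoring G c' := by
  induction l generalizing v c with
  | nil => exact ⟨_, hc.update_of_isFreeColor hu hlast⟩
  | cons w l ih =>
    have hv : v ∉ w :: l := (List.nodup_cons.mp hF.nodup).1
    have hvw : v ≠ w := fun h ↦ hv (h ▸ List.mem_cons_self)
    have huv : u ≠ v := (hF.adj v List.mem_cons_self).ne
    have huw : G.Adj u w := hF.adj w (List.mem_cons_of_mem _ List.mem_cons_self)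
    obtain ⟨hvfree, hchain⟩ := List.isChain_cons_cons.mp hF.isChain
    have hshifted : IsFan G (Function.update c s(u, v) (c s(u, w))) u w l := by
      refine ⟨hF.nodup.of_cons, fun x hx ↦ hF.adj x (List.mem_cons_of_mem _ hx),
        hchain.imp_of_mem_imp fun x y hx hy hxy ↦ ?_⟩
      have hyv : s(u, y) ≠ s(u, v) := fun h ↦ hv (Sym2.congr_right.mp h ▸ hy)
      rw [Function.update_of_ne hyv]
      exact hxy.shift (fun h ↦ hv (h ▸ hx)) huw hvw
    refine ih hshifted (hc.shift huw hvw hvfree) (hu.shift huv huw hvw) ?_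
    rw [List.getLast_cons_cons] at hlast
    exact hlast.shift (fun h ↦ hv (h ▸ List.getLast_mem _)) huw hvw

theorem kempeSwap (hF : IsFan G c u v l) (hu : IsFreeColor (G.deleteEdges {s(u, v)}) c u a)
    (hb : ∀ z ∈ l, c s(u, z) ≠ b) :
    IsFan G (_root_.kempeSwap (G.deleteEdges {s(u, v)}) c a b u) u v l :=
  ⟨hF.nodup, hF.adj,
    isChain_kempeSwap hu (fun z hz ↦ ⟨hF.adj_deleteEdges hz, hb z hz⟩) hF.isChain⟩

theorem kempeSwap_of_reachable (hF : IsFan G c u v (l₁ ++ y :: l₂))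
    (hc : IsProperEdgeColoring (G.deleteEdges {s(u, v)}) c)
    (hu : IsFreeColor (G.deleteEdges {s(u, v)}) c u a) (hy : c s(u, y) = b)
    (hp : (kempeGraph (G.deleteEdges {s(u, v)}) c a b).Reachable u
      ((v :: l₁).getLast (List.cons_ne_nil v l₁))) :
    IsFan G (_root_.kempeSwap (G.deleteEdges {s(u, v)}) c a b u) u v (l₁ ++ y :: l₂) := by
  have hyl : y ∈ l₁ ++ y :: l₂ := by simp
  have hb : ∀ z ∈ l₁ ++ l₂, (G.deleteEdges {s(u, v)}).Adj u z ∧ c s(u, z) ≠ b := by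
    intro z hz
    have hzl : z ∈ l₁ ++ y :: l₂ := by
      simp only [List.mem_append, List.mem_cons] at hz ⊢
      tauto
    have hzy : z ≠ y := fun h ↦
      (List.nodup_cons.mp (List.nodup_middle.mp hF.nodup.of_cons)).1 (h ▸ hz)
    exact ⟨hF.adj_deleteEdges hzl, hy ▸ hF.color_ne hc hzl hyl hzy⟩
  have hchain := hF.isChain
  refine ⟨hF.nodup, hF.adj, ?_⟩
  rw [← List.cons_append, List.isChain_append] at hchain ⊢
  refine ⟨isChain_kempeSwap hu (fun z hz ↦ hb z (List.mem_append_left _ hz)) hchain.1,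
    isChain_kempeSwap hu (fun z hz ↦ hb z (List.mem_append_right _ hz)) hchain.2.1, ?_⟩
  simp only [List.getLast?_eq_some_getLast (List.cons_ne_nil v l₁), List.head?_cons,
    Option.mem_def, Option.some.injEq, forall_eq']
  rw [kempeSwap_apply (hF.adj_deleteEdges hyl), if_pos (Reachable.refl u)]
  simpa [hy] using hF.isFreeColor_getLast.kempeSwap_of_reachable hp

end IsFan

theorem exists_isProperEdgeColoring_of_deleteEdges [Fintype V] [DecidableRel G.Adj]
    (hdeg : ∀ x, G.degree x < n) {u v : V} (huv : G.Adj u v)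
    (hc : IsProperEdgeColoring (G.deleteEdges {s(u, v)}) c) :
    ∃ c' : Sym2 V → Fin n, IsProperEdgeColoring G c' := by
  classical
  set H := G.deleteEdges {s(u, v)}
  have hfree (x : V) : ∃ γ, IsFreeColor H c x γ :=
    (exists_isFreeColor (hdeg x)).imp fun _ h ↦ h.of_le (deleteEdges_le _)
  obtain ⟨l, hF, hmax⟩ := IsFan.exists_maximal (c := c) huv
  set w := (v :: l).getLast (List.cons_ne_nil v l)
  obtain ⟨β, hβw⟩ := hfree w
  by_cases hβu : IsFreeColor H c u β
  · exact hF.exists_isProperEdgeColoring hc hβu hβw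
  obtain ⟨α, hαu⟩ := hfree u
  obtain ⟨y, huy, hβy⟩ : ∃ y, H.Adj u y ∧ c s(u, y) = β := by simpa [IsFreeColor] using hβu
  have hyl : y ∈ l := by
    have hyv : y ≠ v := fun h ↦ (deleteEdges_adj.mp huy).2 (by simp [h])
    by_contra hyl
    exact hmax y (deleteEdges_le _ huy) (by simp [hyv, hyl]) (hβy ▸ hβw)
  obtain ⟨l₁, l₂, rfl⟩ := List.append_of_mem hyl
  set p := (v :: l₁).getLast (List.cons_ne_nil v l₁)
  have hβp : IsFreeColor H c p β := hβy ▸ hF.isFreeColor_getLast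
  have hβu' : IsFreeColor H (kempeSwap H c α β u) u β := by
    simpa using hαu.kempeSwap_of_reachable (a := α) (b := β) (Reachable.refl u)
  by_cases hp : (kempeGraph H c α β).Reachable u p
  · have hpw : p ≠ w := by
      have hnodup := hF.nodup
      rw [← List.cons_append] at hnodup
      have hw_mem : w ∈ y :: l₂ := by simp [w]
      exact fun h ↦ List.disjoint_of_nodup_append hnodup (List.getLast_mem _) (h ▸ hw_mem)
    have hp_mem : p ∈ v :: (l₁ ++ y :: l₂) := by
      rw [← List.cons_append]; exact List.mem_append_left _ (List.getLast_mem _)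
    have hw : ¬ (kempeGraph H c α β).Reachable u w :=
      not_reachable_kempeGraph_of_isFreeColor hc hαu hβp hβw (hF.adj p hp_mem).ne
        (hF.adj w (List.getLast_mem _)).ne hpw hp
    exact (hF.kempeSwap_of_reachable hc hαu hβy hp).exists_isProperEdgeColoring hc.kempeSwap
      hβu' (hβw.kempeSwap_of_not_reachable hw)
  · have hy : y ∉ l₁ := fun hy ↦
      (List.nodup_cons.mp (List.nodup_middle.mp hF.nodup.of_cons)).1 (List.mem_append_left _ hy)
    have hb : ∀ z ∈ l₁, c s(u, z) ≠ β := fun z hz ↦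
      hβy ▸ hF.color_ne hc (by simp [hz]) (by simp) fun h ↦ hy (h ▸ hz)
    exact (hF.of_append.kempeSwap hαu hb).exists_isProperEdgeColoring hc.kempeSwap hβu'
      (hβp.kempeSwap_of_not_reachable hp)

theorem exists_isProperEdgeColoring_of_degree_le [Fintype V] {Δ : ℕ} (hΔ : Δ < n)
    (G : SimpleGraph V) [DecidableRel G.Adj] (hdeg : ∀ x, G.degree x ≤ Δ) :
    ∃ c : Sym2 V → Fin n, IsProperEdgeColoring G c := by
  revert ‹DecidableRel G.Adj› hdeg
  induction G using WellFoundedLT.induction with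
  | _ G ih =>
    intro _ hdeg
    classical
    rcases em (∃ u v, G.Adj u v) with ⟨u, v, huv⟩ | hG
    · have hlt : G.deleteEdges {s(u, v)} < G := (deleteEdges_le _).lt_of_ne fun h ↦
        (deleteEdges_adj.mp (h.symm ▸ huv : (G.deleteEdges {s(u, v)}).Adj u v)).2 rfl
      obtain ⟨c, hc⟩ := ih _ hlt fun x ↦ (degree_le_of_le (deleteEdges_le _)).trans (hdeg x)
      exact exists_isProperEdgeColoring_of_deleteEdges (fun x ↦ (hdeg x).trans_lt hΔ) huv hc
    · exact ⟨fun _ ↦ ⟨0, by omega⟩,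
        isProperEdgeColoring_iff.mpr fun x y _ hxy _ ↦ (hG ⟨x, y, hxy⟩).elim⟩

end

theorem stmt_18_general {V : Type*} [Fintype V] (Δ : ℕ)
    (G₁ G₂ : SimpleGraph V)
    [DecidableRel G₁.Adj] [DecidableRel G₂.Adj] [DecidableRel (G₁ ⊓ G₂).Adj]
    (hreg : ∀ v : V, 0 < (G₁ ⊓ G₂).degree v → (G₁ ⊓ G₂).degree v = Δ)
    (hd₁ : ∀ v : V, G₁.degree v ≤ Δ) (hd₂ : ∀ v : V, G₂.degree v ≤ Δ) :
    ∃ c : Sym2 V → Fin (Δ + 2),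
      IsProperEdgeColoring G₁ c ∧ IsProperEdgeColoring G₂ c := by
  have hΔ : Δ < Δ + 2 := by omega
  obtain ⟨c₁, hc₁⟩ := exists_isProperEdgeColoring_of_degree_le hΔ G₁ hd₁
  obtain ⟨c₂, hc₂⟩ := exists_isProperEdgeColoring_of_degree_le hΔ G₂ hd₂
  have hsat {x y z : V} (hxy : (G₁ ⊓ G₂).Adj x y) (hxz : G₂.Adj x z) : G₁.Adj x z := by
    have hx := hreg x (((G₁ ⊓ G₂).degree_pos_iff_exists_adj x).mpr ⟨y, hxy⟩)
    exact (adj_of_le_of_degree_le inf_le_right (hx ▸ hd₂ x) hxz).1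
  refine ⟨fun e ↦ if e ∈ G₁.edgeSet then c₁ e else c₂ e,
    hc₁.congr fun x y hxy ↦ (if_pos hxy).symm, isProperEdgeColoring_iff.mpr ?_⟩
  intro x y z hxy hxz hcol
  by_cases hy : G₁.Adj x y
  · have hz := hsat ⟨hy, hxy⟩ hxz
    exact hc₁.eq_of_adj hy hz (by simpa [hy, hz] using hcol)
  by_cases hz : G₁.Adj x z
  · exact absurd (hsat ⟨hz, hxz⟩ hxy) hy
  · exact hc₂.eq_of_adj hxy hxz (by simpa [hy, hz] using hcol)

/-- If G₁ ∩ G₂ is Δ-regular (every vertex of positive degree in G₁ ⊓ G₂ has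
degree exactly Δ there) and Δ(G₁), Δ(G₂) ≤ Δ, then there is an edge-colouring
of G₁ ∪ G₂ with Δ+2 colours that is proper on G₁ and on G₂,
i.e. χ'(G₁,G₂) ≤ Δ + 2. -/
theorem stmt_18 {V : Type*} [Fintype V] [DecidableEq V] (Δ : ℕ)
    (G₁ G₂ : SimpleGraph V)
    [DecidableRel G₁.Adj] [DecidableRel G₂.Adj] [DecidableRel (G₁ ⊓ G₂).Adj]
    (hreg : ∀ v : V, 0 < (G₁ ⊓ G₂).degree v → (G₁ ⊓ G₂).degree v = Δ)
    (hd₁ : ∀ v : V, G₁.degree v ≤ Δ) (hd₂ : ∀ v : V, G₂.degree v ≤ Δ) :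
    ∃ c : Sym2 V → Fin (Δ + 2),
      IsProperEdgeColoring G₁ c ∧ IsProperEdgeColoring G₂ c :=
  stmt_18_general Δ G₁ G₂ hreg hd₁ hd₂
end

section
/- Suppose ν(k) denotes the maximum size of a fractional matching over all intersecting hypergraphs on k vertices. Then ν is non-decreasing in k, ν(1) = ν(2) = 1, ν(3) = 3/2, and ν(6) = 2. -/
set_option maxRecDepth 20000

/-- The set of sizes of fractional matchings of intersecting hypergraphs on
k vertices. -/
def nuSet (k : ℕ) : Set ℝ :=
  {s : ℝ | ∃ (E : Finset (Finset (Fin k))) (w : Finset (Fin k) → ℝ),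
    (∀ e ∈ E, e.Nonempty) ∧
    (∀ e ∈ E, ∀ f ∈ E, (e ∩ f).Nonempty) ∧
    (∀ e ∈ E, w e ∈ Set.Icc (0 : ℝ) 1) ∧
    (∀ v : Fin k, ∑ e ∈ E.filter (fun e => v ∈ e), w e ≤ 1) ∧
    s = ∑ e ∈ E, w e}

/-- ν(k): the maximum fractional matching size over intersecting hypergraphs
on k vertices. -/
noncomputable def nu (k : ℕ) : ℝ := sSup (nuSet k)

lemma swap_sum {k : ℕ} (S : Finset (Fin k)) (E : Finset (Finset (Fin k)))
    (w : Finset (Fin k) → ℝ) :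
    ∑ v ∈ S, ∑ e ∈ E.filter (fun e => v ∈ e), w e
      = ∑ e ∈ E, ((S ∩ e).card : ℝ) * w e := by
  simp_rw [Finset.sum_filter]
  rw [Finset.sum_comm]
  refine Finset.sum_congr rfl fun e _ => ?_
  rw [← Finset.sum_filter]
  have : S.filter (fun v => v ∈ e) = S ∩ e := by
    ext x; simp [Finset.mem_inter]
  rw [this, Finset.sum_const, nsmul_eq_mul]

lemma vertex_bound {k : ℕ} (S : Finset (Fin k)) (E : Finset (Finset (Fin k)))
    (w : Finset (Fin k) → ℝ)
    (hv : ∀ v : Fin k, ∑ e ∈ E.filter (fun e => v ∈ e), w e ≤ 1) :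
    ∑ e ∈ E, ((S ∩ e).card : ℝ) * w e ≤ S.card := by
  rw [← swap_sum]
  calc ∑ v ∈ S, ∑ e ∈ E.filter (fun e => v ∈ e), w e
      ≤ ∑ _v ∈ S, (1:ℝ) := Finset.sum_le_sum fun v _ => hv v
    _ = S.card := by simp

lemma nuSet_le_of {k r : ℕ} {c : ℝ} (hrc : (r : ℝ) ≤ c)
    (hkc : (k : ℝ) ≤ (r + 1) * c) : ∀ x ∈ nuSet k, x ≤ c := by
  rintro x ⟨E, w, hne, hint, hw, hv, rfl⟩
  by_cases h : ∃ e₀ ∈ E, e₀.card ≤ r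
  · obtain ⟨e₀, he₀, hcard⟩ := h
    calc ∑ e ∈ E, w e ≤ ∑ e ∈ E, ((e₀ ∩ e).card : ℝ) * w e := by
          refine Finset.sum_le_sum fun e he => ?_
          have h1 : 1 ≤ (e₀ ∩ e).card := Finset.card_pos.2 (hint e₀ he₀ e he)
          have h1' : (1:ℝ) ≤ ((e₀ ∩ e).card : ℝ) := by exact_mod_cast h1
          have := (hw e he).1
          nlinarith
      _ ≤ e₀.card := vertex_bound e₀ E w hv
      _ ≤ r := Nat.cast_le.2 hcard
      _ ≤ c := hrc
  · push_neg at h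
    have hbig : ∀ e ∈ E, (r + 1 : ℝ) ≤ e.card := fun e he => by
      exact_mod_cast Nat.cast_le.2 (h e he)
    have key : (r + 1 : ℝ) * ∑ e ∈ E, w e ≤ k := by
      calc (r + 1 : ℝ) * ∑ e ∈ E, w e = ∑ e ∈ E, (r + 1 : ℝ) * w e := Finset.mul_sum ..
        _ ≤ ∑ e ∈ E, ((Finset.univ ∩ e).card : ℝ) * w e := by
            refine Finset.sum_le_sum fun e he => ?_
            have := (hw e he).1
            have h2 : (r + 1 : ℝ) ≤ ((Finset.univ ∩ e).card : ℝ) := by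
              rw [Finset.univ_inter]; exact hbig e he
            nlinarith
        _ ≤ (Finset.univ : Finset (Fin k)).card := vertex_bound _ E w hv
        _ = k := by simp
    have hr1 : (0:ℝ) < r + 1 := by positivity
    nlinarith

lemma zero_mem_nuSet (k : ℕ) : (0:ℝ) ∈ nuSet k :=
  ⟨∅, fun _ => 0, by simp, by simp, by simp, by simp, by simp⟩

lemma bddAbove_nuSet (k : ℕ) : BddAbove (nuSet k) :=
  ⟨k, fun x hx => nuSet_le_of (r := k) (le_refl _)
    (by nlinarith [Nat.cast_nonneg (α := ℝ) k]) x hx⟩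

lemma nuSet_mono : ∀ {k l : ℕ}, k ≤ l → nuSet k ⊆ nuSet l := by
  intro k l h x hx
  obtain ⟨E, w, hne, hint, hw, hv, rfl⟩ := hx
  classical
  set emb : Fin k ↪ Fin l := Fin.castLEEmb h with hemb
  set F : Finset (Fin k) ↪ Finset (Fin l) :=
    ⟨Finset.map emb, Finset.map_injective emb⟩ with hF
  have hFe : ∀ e : Finset (Fin k), F e = e.map emb := fun _ => rfl
  have hkey : ∀ e ∈ E, ∑ f ∈ E.filter (fun f => F f = F e), w f = w e := by
    intro e he
    have : E.filter (fun f => F f = F e) = {e} := by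
      ext f; simp only [Finset.mem_filter, Finset.mem_singleton]
      constructor
      · rintro ⟨_, hfe⟩; exact F.injective hfe
      · rintro rfl; exact ⟨he, rfl⟩
    rw [this, Finset.sum_singleton]
  refine ⟨E.map F, fun e' => ∑ e ∈ E.filter (fun e => F e = e'), w e, ?_, ?_, ?_, ?_, ?_⟩
  · rintro e' he'
    rw [Finset.mem_map] at he'
    obtain ⟨e, he, rfl⟩ := he'
    rw [hFe]; exact (hne e he).map
  · rintro e' he' f' hf'
    rw [Finset.mem_map] at he' hf'
    obtain ⟨e, he, rfl⟩ := he'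
    obtain ⟨f, hf, rfl⟩ := hf'
    rw [hFe, hFe, ← Finset.map_inter]
    exact (hint e he f hf).map
  · rintro e' he'
    rw [Finset.mem_map] at he'
    obtain ⟨e, he, rfl⟩ := he'
    simpa only [hkey e he] using hw e he
  · intro v
    by_cases hvk : (v : ℕ) < k
    · set u : Fin k := ⟨v, hvk⟩ with hu
      have hfilter : (E.map F).filter (fun e => v ∈ e)
          = (E.filter (fun e => u ∈ e)).map F := by
        rw [Finset.filter_map]
        congr 1
        refine Finset.filter_congr fun e _ => ?_
        show v ∈ F e ↔ u ∈ e
        rw [hFe, Finset.mem_map]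
        constructor
        · rintro ⟨a, ha, hav⟩
          have : a = u := by
            apply Fin.ext
            simpa [hemb] using congrArg Fin.val hav
          rwa [← this]
        · intro hu'; exact ⟨u, hu', rfl⟩
      rw [hfilter, Finset.sum_map]
      calc ∑ e ∈ E.filter (fun e => u ∈ e), ∑ f ∈ E.filter (fun f => F f = F e), w f
          = ∑ e ∈ E.filter (fun e => u ∈ e), w e := by
            refine Finset.sum_congr rfl fun e he => ?_
            exact hkey e (Finset.mem_filter.1 he).1
        _ ≤ 1 := hv u
    · have hfilter : (E.map F).filter (fun e => v ∈ e) = ∅ := by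
        rw [Finset.filter_eq_empty_iff]
        rintro e' he'
        rw [Finset.mem_map] at he'
        obtain ⟨e, _, rfl⟩ := he'
        rw [hFe, Finset.mem_map]
        rintro ⟨a, _, rfl⟩
        exact hvk (by simpa [hemb] using a.isLt)
      rw [hfilter, Finset.sum_empty]
      norm_num
  · rw [Finset.sum_map]
    exact (Finset.sum_congr rfl fun e he => hkey e he).symm

def E1 : Finset (Finset (Fin 1)) := {{0}}
def E3 : Finset (Finset (Fin 3)) := {{0,1},{1,2},{0,2}}
def E6 : Finset (Finset (Fin 6)) := {{0,1,2},{0,3,4},{1,3,5},{2,4,5}}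

lemma one_mem_nuSet_one : (1:ℝ) ∈ nuSet 1 := by
  refine ⟨E1, fun _ => 1, by decide, by decide, by norm_num, ?_, by simp [E1]⟩
  intro v
  rw [Finset.sum_const, nsmul_eq_mul]
  have h : (E1.filter (fun e => v ∈ e)).card = 1 := by fin_cases v <;> decide
  rw [h]; norm_num

lemma mem_nuSet_three : (3/2:ℝ) ∈ nuSet 3 := by
  refine ⟨E3, fun _ => 1/2, by decide, by decide, by norm_num, ?_, ?_⟩
  · intro v
    rw [Finset.sum_const, nsmul_eq_mul]
    have h : (E3.filter (fun e => v ∈ e)).card = 2 := by fin_cases v <;> decide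
    rw [h]; norm_num
  · rw [Finset.sum_const, nsmul_eq_mul, show E3.card = 3 from by decide]
    norm_num

lemma mem_nuSet_six : (2:ℝ) ∈ nuSet 6 := by
  refine ⟨E6, fun _ => 1/2, by decide, by decide, by norm_num, ?_, ?_⟩
  · intro v
    rw [Finset.sum_const, nsmul_eq_mul]
    have h : (E6.filter (fun e => v ∈ e)).card = 2 := by fin_cases v <;> decide
    rw [h]; norm_num
  · rw [Finset.sum_const, nsmul_eq_mul, show E6.card = 4 from by decide]
    norm_num

/-- ν is non-decreasing, ν(1) = ν(2) = 1, ν(3) = 3/2 and ν(6) = 2. -/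
theorem stmt_19 :
    Monotone nu ∧ nu 1 = 1 ∧ nu 2 = 1 ∧ nu 3 = 3 / 2 ∧ nu 6 = 2 := by
  have hmono : Monotone nu := fun k l h =>
    csSup_le_csSup (bddAbove_nuSet l) ⟨0, zero_mem_nuSet k⟩ (nuSet_mono h)
  have h1 : nu 1 = 1 := le_antisymm
    (csSup_le ⟨0, zero_mem_nuSet 1⟩
      (nuSet_le_of (r := 1) (by norm_num) (by norm_num)))
    (le_csSup (bddAbove_nuSet 1) one_mem_nuSet_one)
  have h2 : nu 2 = 1 := le_antisymm
    (csSup_le ⟨0, zero_mem_nuSet 2⟩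
      (nuSet_le_of (r := 1) (by norm_num) (by norm_num)))
    (h1 ▸ hmono (by norm_num : 1 ≤ 2))
  have h3 : nu 3 = 3 / 2 := le_antisymm
    (csSup_le ⟨0, zero_mem_nuSet 3⟩
      (nuSet_le_of (r := 1) (by norm_num) (by norm_num)))
    (le_csSup (bddAbove_nuSet 3) mem_nuSet_three)
  have h6 : nu 6 = 2 := le_antisymm
    (csSup_le ⟨0, zero_mem_nuSet 6⟩
      (nuSet_le_of (r := 2) (by norm_num) (by norm_num)))
    (le_csSup (bddAbove_nuSet 6) mem_nuSet_six)
  exact ⟨hmono, h1, h2, h3, h6⟩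
end
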